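/- arXiv:2510.20648 — 6 statements merged into one kernel-verified Lean document; each statement's English description precedes it below -/
import Mathlib

section
/- The Catalan constant G = ∑_{n≥0} (-1)^n/(2n+1)^2 equals the double integral of 1/(1-x²-y²) over the simplex Δ = {(x,y) ∈ ℝ² : x ≥ 0, y ≥ 0, 1-x-y ≥ 0}. -/
/-!
Integrating first in `y`, the fibre of the simplex over `x ∈ (0,1)` contributes
`∫₀^{1-x} dy / (a² - y²) = log ((a + b) / (a - b)) / (2a)` with `a = √(1 - x²)`, `b = 1 - x`.
The substitution `x = 2t / (1 + t²)` rationalises `a` and turns `(a + b) / (a - b)` into `1 / t`,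
so the double integral becomes `∫₀¹ -log t / (1 + t²) dt`. Expanding `1 / (1 + t²)` as a
geometric series and using `∫₀¹ t^s (-log t) dt = 1 / (s + 1)²` (a Gamma integral after
`t = e^{-x}`) gives Catalan's series.
-/

open MeasureTheory Real Set

section LogMoments

theorem image_exp_neg_Ioi_zero : (fun x : ℝ => exp (-x)) '' Ioi 0 = Ioo 0 1 := by
  rw [← exp_zero, ← image_exp_Iio, show Iio (0 : ℝ) = Neg.neg '' Ioi 0 by simp, image_image]

theorem hasDerivWithinAt_exp_neg (s : Set ℝ) (x : ℝ) :
    HasDerivWithinAt (fun x => exp (-x)) (-exp (-x)) s x := by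
  simpa using ((hasDerivAt_neg x).exp).hasDerivWithinAt

theorem injective_exp_neg : Function.Injective fun x : ℝ => exp (-x) :=
  fun x y h => by simpa using h

variable {E : Type*} [NormedAddCommGroup E] [NormedSpace ℝ E]

theorem integral_Ioo_zero_one_eq_integral_exp_neg (f : ℝ → E) :
    ∫ t in Ioo 0 1, f t = ∫ x in Ioi 0, exp (-x) • f (exp (-x)) := by
  rw [← image_exp_neg_Ioi_zero, integral_image_eq_integral_abs_deriv_smul measurableSet_Ioi
    (fun x _ => hasDerivWithinAt_exp_neg _ x) injective_exp_neg.injOn]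
  simp [abs_of_pos (exp_pos _)]

theorem integrableOn_Ioo_zero_one_iff_exp_neg (f : ℝ → E) :
    IntegrableOn f (Ioo 0 1) ↔ IntegrableOn (fun x => exp (-x) • f (exp (-x))) (Ioi 0) := by
  rw [← image_exp_neg_Ioi_zero, integrableOn_image_iff_integrableOn_abs_deriv_smul
    measurableSet_Ioi (fun x _ => hasDerivWithinAt_exp_neg _ x) injective_exp_neg.injOn]
  simp [abs_of_pos (exp_pos _)]

theorem exp_neg_smul_rpow_mul_neg_log (s x : ℝ) :
    exp (-x) • (exp (-x) ^ s * -log (exp (-x))) =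
      x ^ (1 : ℝ) * exp (-(s + 1) * x ^ (1 : ℝ)) := by
  rw [log_exp, neg_neg, rpow_one, ← exp_mul, smul_eq_mul, ← mul_assoc, ← exp_add, mul_comm]
  ring_nf

theorem integrableOn_rpow_mul_neg_log {s : ℝ} (hs : -1 < s) :
    IntegrableOn (fun t => t ^ s * -log t) (Ioo 0 1) := by
  rw [integrableOn_Ioo_zero_one_iff_exp_neg]
  simp_rw [exp_neg_smul_rpow_mul_neg_log]
  exact integrableOn_rpow_mul_exp_neg_mul_rpow (by norm_num) one_pos (by linarith)

theorem integral_rpow_mul_neg_log {s : ℝ} (hs : -1 < s) :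
    ∫ t in Ioo 0 1, t ^ s * -log t = 1 / (s + 1) ^ 2 := by
  rw [integral_Ioo_zero_one_eq_integral_exp_neg]
  simp_rw [exp_neg_smul_rpow_mul_neg_log]
  rw [integral_rpow_mul_exp_neg_mul_rpow one_pos (by norm_num) (by linarith)]
  norm_num [rpow_neg (by linarith : 0 ≤ s + 1)]

theorem integrableOn_pow_mul_neg_log (k : ℕ) :
    IntegrableOn (fun t => t ^ k * -log t) (Ioo 0 1) := by
  simpa using integrableOn_rpow_mul_neg_log (s := k) (by linarith [k.cast_nonneg (α := ℝ)])

theorem integral_pow_two_mul_mul_neg_log (n : ℕ) :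
    ∫ t in Ioo 0 1, t ^ (2 * n) * -log t = 1 / (2 * (n : ℝ) + 1) ^ 2 := by
  have h := integral_rpow_mul_neg_log (s := (2 * n : ℕ))
    (by linarith [(2 * n).cast_nonneg (α := ℝ)])
  simp_rw [rpow_natCast] at h
  rw [h]
  push_cast
  ring

end LogMoments

section CatalanSeries

theorem summable_one_div_two_mul_add_one_sq :
    Summable fun n : ℕ => 1 / (2 * (n : ℝ) + 1) ^ 2 := by
  refine (((summable_one_div_nat_add_rpow (1 / 2) 2).mpr one_lt_two).mul_left (1 / 4)).congr
    fun n => ?_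
  rw [abs_of_pos (by positivity), rpow_two]
  field_simp
  ring

theorem hasSum_neg_log_div_one_add_sq {t : ℝ} (ht : t ∈ Ioo 0 1) :
    HasSum (fun n : ℕ => (-1 : ℝ) ^ n * (t ^ (2 * n) * -log t)) (-log t / (1 + t ^ 2)) := by
  have hq : ‖-t ^ 2‖ < 1 := by
    rw [norm_neg, norm_pow, norm_of_nonneg ht.1.le]
    nlinarith [ht.1, ht.2]
  have h := (hasSum_geometric_of_norm_lt_one hq).mul_right (-log t)
  rw [sub_neg_eq_add, ← div_eq_inv_mul] at h
  have hterm (n : ℕ) : (-t ^ 2) ^ n * -log t = (-1) ^ n * (t ^ (2 * n) * -log t) := by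
    rw [neg_pow, pow_mul, mul_assoc]
  simpa only [hterm] using h

theorem integral_neg_log_div_one_add_sq :
    ∫ t in Ioo 0 1, -log t / (1 + t ^ 2) = ∑' n : ℕ, (-1 : ℝ) ^ n / (2 * n + 1) ^ 2 := by
  have hnorm (n : ℕ) : ∫ t in Ioo 0 1, ‖(-1 : ℝ) ^ n * (t ^ (2 * n) * -log t)‖ =
      1 / (2 * (n : ℝ) + 1) ^ 2 := by
    rw [← integral_pow_two_mul_mul_neg_log n]
    refine setIntegral_congr_fun measurableSet_Ioo fun t ht => ?_
    simp [abs_of_nonneg ht.1.le, abs_of_nonpos (log_nonpos ht.1.le ht.2.le)]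
  rw [← setIntegral_congr_fun measurableSet_Ioo
      fun t ht => (hasSum_neg_log_div_one_add_sq ht).tsum_eq,
    ← integral_tsum_of_summable_integral_norm
      (fun n => (integrableOn_pow_mul_neg_log (2 * n)).const_mul _)
      (by simpa only [hnorm] using summable_one_div_two_mul_add_one_sq)]
  refine tsum_congr fun n => ?_
  rw [integral_const_mul, integral_pow_two_mul_mul_neg_log, mul_one_div]

end CatalanSeries

section SimplexFibers

theorem lintegral_prod_setOf_mem {α β : Type*} [MeasurableSpace α] [MeasurableSpace β]
    {μ : Measure α} {ν : Measure β} [SFinite μ] [SFinite ν] {s : Set α} {t : α → Set β}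
    (hs : MeasurableSet s) (ht : ∀ x, MeasurableSet (t x))
    (hst : MeasurableSet {p : α × β | p.1 ∈ s ∧ p.2 ∈ t p.1}) {f : α × β → ENNReal}
    (hf : Measurable f) :
    ∫⁻ p in {p : α × β | p.1 ∈ s ∧ p.2 ∈ t p.1}, f p ∂μ.prod ν =
      ∫⁻ x in s, ∫⁻ y in t x, f (x, y) ∂ν ∂μ := by
  rw [← lintegral_indicator hst, lintegral_prod _ (hf.indicator hst).aemeasurable,
    ← lintegral_indicator hs]
  congr 1
  ext x
  by_cases hx : x ∈ s
  · rw [indicator_of_mem hx, ← lintegral_indicator (ht x)]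
    congr 1
    ext y
    by_cases hy : y ∈ t x <;> simp [indicator, hx, hy]
  · simp [indicator, hx]

theorem integral_one_div_sq_sub_sq {a b : ℝ} (hb : 0 ≤ b) (hba : b < a) :
    ∫ y in 0..b, 1 / (a ^ 2 - y ^ 2) = log ((a + b) / (a - b)) / (2 * a) := by
  have hderiv : ∀ y ∈ uIcc 0 b,
      HasDerivAt (fun y => (log (a + y) - log (a - y)) / (2 * a)) (1 / (a ^ 2 - y ^ 2)) y := by
    intro y hy
    rw [uIcc_of_le hb] at hy
    have hplus : a + y ≠ 0 := by linarith [hy.1]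
    have hminus : a - y ≠ 0 := by linarith [hy.2]
    have ha : a ≠ 0 := by linarith [hy.1]
    refine ((((hasDerivAt_id y).const_add a).log hplus).sub
      (((hasDerivAt_id y).const_sub a).log hminus)).div_const (2 * a) |>.congr_deriv ?_
    rw [id, show a ^ 2 - y ^ 2 = (a + y) * (a - y) by ring]
    field_simp
    ring
  have hcont : ContinuousOn (fun y => 1 / (a ^ 2 - y ^ 2)) (uIcc 0 b) := by
    refine continuousOn_const.div (by fun_prop) fun y hy => ?_
    rw [uIcc_of_le hb] at hy
    nlinarith [hy.1, hy.2]
  rw [intervalIntegral.integral_eq_sub_of_hasDerivAt hderiv hcont.intervalIntegrable,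
    log_div (by linarith) (by linarith)]
  simp

noncomputable def simplexFiberIntegral (x : ℝ) : ℝ :=
  ∫ y in 0..1 - x, 1 / (1 - x ^ 2 - y ^ 2)

theorem ofReal_simplexFiberIntegral {x : ℝ} (hx : x ∈ Ioo 0 1) :
    ENNReal.ofReal (simplexFiberIntegral x) =
      ∫⁻ y in Icc 0 (1 - x), ENNReal.ofReal (1 / (1 - x ^ 2 - y ^ 2)) := by
  have hpos : ∀ y ∈ Icc 0 (1 - x), 0 < 1 - x ^ 2 - y ^ 2 := fun y hy => by
    nlinarith [hx.1, hx.2, hy.1, hy.2]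
  have hcont : ContinuousOn (fun y => 1 / (1 - x ^ 2 - y ^ 2)) (Icc 0 (1 - x)) :=
    continuousOn_const.div (by fun_prop) fun y hy => (hpos y hy).ne'
  rw [← ofReal_integral_eq_lintegral_ofReal hcont.integrableOn_Icc
      ((ae_restrict_iff' measurableSet_Icc).mpr
        (ae_of_all _ fun y hy => (one_div_pos.mpr (hpos y hy)).le)),
    integral_Icc_eq_integral_Ioc, ← intervalIntegral.integral_of_le (by linarith [hx.2]),
    simplexFiberIntegral]

theorem lintegral_simplex :
    ∫⁻ p in {p : ℝ × ℝ | 0 ≤ p.1 ∧ 0 ≤ p.2 ∧ 0 ≤ 1 - p.1 - p.2},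
        ENNReal.ofReal (1 / (1 - p.1 ^ 2 - p.2 ^ 2)) =
      ∫⁻ x in Ioo 0 1, ENNReal.ofReal (simplexFiberIntegral x) := by
  have hΔ : {p : ℝ × ℝ | 0 ≤ p.1 ∧ 0 ≤ p.2 ∧ 0 ≤ 1 - p.1 - p.2} =
      {p : ℝ × ℝ | p.1 ∈ Icc 0 1 ∧ p.2 ∈ Icc 0 (1 - p.1)} := by
    ext ⟨x, y⟩
    simp only [mem_ofPred_eq, mem_Icc]
    constructor
    · rintro ⟨hx, hy, hxy⟩
      exact ⟨⟨hx, by linarith⟩, hy, by linarith⟩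
    · rintro ⟨⟨hx, -⟩, hy, hxy⟩
      exact ⟨hx, hy, by linarith⟩
  rw [hΔ, Measure.volume_eq_prod, lintegral_prod_setOf_mem measurableSet_Icc
      (fun _ => measurableSet_Icc) (by measurability) (by fun_prop),
    setLIntegral_congr Ioo_ae_eq_Icc.symm]
  exact setLIntegral_congr_fun measurableSet_Ioo fun x hx => (ofReal_simplexFiberIntegral hx).symm

end SimplexFibers

section WeierstrassSubstitution

theorem hasDerivAt_two_mul_div_one_add_sq (t : ℝ) :
    HasDerivAt (fun t => 2 * t / (1 + t ^ 2)) (2 * (1 - t ^ 2) / (1 + t ^ 2) ^ 2) t := by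
  refine ((hasDerivAt_id t).const_mul 2).div ((hasDerivAt_pow 2 t).const_add 1)
    (by positivity) |>.congr_deriv ?_
  simp only [id]
  ring

theorem injOn_two_mul_div_one_add_sq : InjOn (fun t : ℝ => 2 * t / (1 + t ^ 2)) (Icc 0 1) := by
  intro a ha b hb h
  rw [div_eq_div_iff (by positivity) (by positivity)] at h
  have : (a - b) * (1 - a * b) = 0 := by linear_combination h / 2
  rcases mul_eq_zero.mp this with h | h
  · linarith
  · nlinarith [ha.1, ha.2, hb.1, hb.2]

theorem image_two_mul_div_one_add_sq_Ioo :
    (fun t : ℝ => 2 * t / (1 + t ^ 2)) '' Ioo 0 1 = Ioo 0 1 := by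
  refine Subset.antisymm ?_ ?_
  · rintro _ ⟨t, ⟨ht0, ht1⟩, rfl⟩
    constructor
    · positivity
    · rw [div_lt_one (by positivity)]
      nlinarith
  · have h := intermediate_value_Ioo zero_le_one (f := fun t : ℝ => 2 * t / (1 + t ^ 2))
      (by fun_prop (disch := intros; positivity))
    norm_num at h
    exact h

theorem simplexFiberIntegral_two_mul_div_one_add_sq {t : ℝ} (ht : t ∈ Ioo 0 1) :
    simplexFiberIntegral (2 * t / (1 + t ^ 2)) = -log t * (1 + t ^ 2) / (2 * (1 - t ^ 2)) := by
  obtain ⟨ht0, ht1⟩ := ht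
  have hpos : 0 < 1 + t ^ 2 := by positivity
  have hsq : 1 - (2 * t / (1 + t ^ 2)) ^ 2 = ((1 - t ^ 2) / (1 + t ^ 2)) ^ 2 := by
    field_simp
    ring
  have hsub : 1 - 2 * t / (1 + t ^ 2) = (1 - t) ^ 2 / (1 + t ^ 2) := by
    field_simp
    ring
  have hratio : ((1 - t ^ 2) / (1 + t ^ 2) + (1 - t) ^ 2 / (1 + t ^ 2)) /
      ((1 - t ^ 2) / (1 + t ^ 2) - (1 - t) ^ 2 / (1 + t ^ 2)) = t⁻¹ := by
    rw [← add_div, ← sub_div, div_div_div_cancel_right₀ hpos.ne',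
      show 1 - t ^ 2 + (1 - t) ^ 2 = 2 * (1 - t) by ring,
      show 1 - t ^ 2 - (1 - t) ^ 2 = 2 * (1 - t) * t by ring,
      div_mul_cancel_left₀ (by linarith)]
  simp_rw [simplexFiberIntegral, hsq, hsub]
  rw [integral_one_div_sq_sub_sq (by positivity), hratio, log_inv]
  · field_simp
  · gcongr ?_ / _
    nlinarith

theorem lintegral_simplexFiberIntegral :
    ∫⁻ x in Ioo 0 1, ENNReal.ofReal (simplexFiberIntegral x) =
      ∫⁻ t in Ioo 0 1, ENNReal.ofReal (-log t / (1 + t ^ 2)) := by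
  conv_lhs => rw [← image_two_mul_div_one_add_sq_Ioo]
  rw [lintegral_image_eq_lintegral_abs_deriv_mul measurableSet_Ioo
    (fun t _ => (hasDerivAt_two_mul_div_one_add_sq t).hasDerivWithinAt)
    (injOn_two_mul_div_one_add_sq.mono Ioo_subset_Icc_self)]
  refine setLIntegral_congr_fun measurableSet_Ioo fun t ht => ?_
  have h1 : 0 < 1 - t ^ 2 := by nlinarith [ht.1, ht.2]
  rw [← ENNReal.ofReal_mul (abs_nonneg _), simplexFiberIntegral_two_mul_div_one_add_sq ht,
    abs_of_pos (by positivity)]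
  congr 1
  field_simp

end WeierstrassSubstitution

/-- The Catalan constant `G = ∑_{n≥0} (-1)^n/(2n+1)^2` equals the double integral of
`1/(1-x²-y²)` over the simplex `Δ = {(x,y) : x ≥ 0, y ≥ 0, 1-x-y ≥ 0}`. -/
theorem catalan_eq_integral_simplex :
    ∫ p : ℝ × ℝ in {p : ℝ × ℝ | 0 ≤ p.1 ∧ 0 ≤ p.2 ∧ 0 ≤ 1 - p.1 - p.2},
        1 / (1 - p.1 ^ 2 - p.2 ^ 2) =
      ∑' n : ℕ, (-1 : ℝ) ^ n / (2 * n + 1) ^ 2 := by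
  have hΔ : MeasurableSet {p : ℝ × ℝ | 0 ≤ p.1 ∧ 0 ≤ p.2 ∧ 0 ≤ 1 - p.1 - p.2} := by
    measurability
  have hf_nonneg : ∀ᵐ p ∂volume.restrict {p : ℝ × ℝ | 0 ≤ p.1 ∧ 0 ≤ p.2 ∧ 0 ≤ 1 - p.1 - p.2},
      0 ≤ 1 / (1 - p.1 ^ 2 - p.2 ^ 2) :=
    (ae_restrict_iff' hΔ).mpr <| ae_of_all _ fun p ⟨hx, hy, hxy⟩ =>
      one_div_nonneg.mpr (by nlinarith)
  have hg_nonneg : ∀ᵐ t ∂volume.restrict (Ioo (0 : ℝ) 1), 0 ≤ -log t / (1 + t ^ 2) :=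
    (ae_restrict_iff' measurableSet_Ioo).mpr <| ae_of_all _ fun t ht =>
      div_nonneg (neg_nonneg.mpr (log_nonpos ht.1.le ht.2.le)) (by positivity)
  rw [integral_eq_lintegral_of_nonneg_ae hf_nonneg (by measurability), lintegral_simplex,
    lintegral_simplexFiberIntegral, ← integral_eq_lintegral_of_nonneg_ae hg_nonneg
      (by fun_prop : Measurable fun t : ℝ => -log t / (1 + t ^ 2)).aestronglyMeasurable,
    integral_neg_log_div_one_add_sq]
end

section
/- The double integral over the simplex Δ = {(x,y) : x, y, 1-x-y ≥ 0} of x⁴y⁴/(1-x²-y²)³ equals -49/384 + (9/64)·G, where G is the Catalan constant. -/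
/-!
Integrating first in `y`, the inner integral `∫₀^{1-x} y⁴/(a² - y²)³ dy` with `a² = 1 - x²` is
elementary; its only transcendental term is `x⁴ artanh t / √(1 - x²)` with
`t = √((1 - x)/(1 + x))`. In the variable `t` (so `x = (1 - t²)/(1 + t²)` and
`dx/√(1 - x²) = -2 dt/(1 + t²)`) its integral over `x ∈ [0, 1]` becomes `2 ∫₀¹ R(t) artanh t dt`
with `R = (1 - t²)⁴/(1 + t²)⁵`. Integrating by parts against the primitive `A` of `R` vanishing
at `t = 1` leaves `∫₀¹ A(t)/(1 - t²) dt`. The transcendental part of `A` is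
`3/8 (arctan t - π/4)`, and `s = (1 - t)/(1 + t)` turns `(π/4 - arctan t)/(1 - t²) dt` into
`arctan s/(2s) ds`, whose integral over `[0, 1]` is Catalan's constant. Since `A` vanishes where
`artanh` blows up, the resulting primitive of the section integral is continuous on `[0, 1]`.
-/

open MeasureTheory Real Set Filter Topology

namespace Real

theorem hasDerivAt_artanh {x : ℝ} (hx : x ∈ Ioo (-1) 1) :
    HasDerivAt artanh (1 - x ^ 2)⁻¹ x := by
  have h₁ : 0 < 1 + x := by linarith [hx.1]
  have h₂ : 0 < 1 - x := by linarith [hx.2]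
  have heq : (fun y => 1 / 2 * log ((1 + y) / (1 - y))) =ᶠ[𝓝 x] artanh :=
    eventually_of_mem (Ioo_mem_nhds hx.1 hx.2) fun y hy =>
      (artanh_eq_half_log (Ioo_subset_Icc_self hy)).symm
  have hquot : HasDerivAt (fun y => (1 + y) / (1 - y))
      ((1 * (1 - x) - (1 + x) * (-1)) / (1 - x) ^ 2) x :=
    ((hasDerivAt_id x).const_add 1).div ((hasDerivAt_id x).const_sub 1) h₂.ne'
  refine (((hquot.log (div_pos h₁ h₂).ne').const_mul (1 / 2)).congr_of_eventuallyEq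
    heq.symm).congr_deriv ?_
  have : 1 - x ^ 2 ≠ 0 := by nlinarith
  field_simp
  ring

theorem tendsto_one_sub_mul_artanh_nhdsLT_one :
    Tendsto (fun x => (1 - x) * artanh x) (𝓝[<] 1) (𝓝 0) := by
  let g : ℝ → ℝ := fun x => ((1 - x) * log (1 + x) - (1 - x) * log (1 - x)) / 2
  have hg : ContinuousAt g 1 := by
    have h₁ : ContinuousAt (fun x : ℝ => (1 - x) * log (1 + x)) 1 := by
      fun_prop (disch := norm_num)
    have h₂ : Continuous fun x : ℝ => (1 - x) * log (1 - x) :=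
      continuous_mul_log.comp (continuous_const.sub continuous_id)
    exact (h₁.sub h₂.continuousAt).div_const 2
  have heq : g =ᶠ[𝓝[<] 1] fun x => (1 - x) * artanh x := by
    filter_upwards [Ioo_mem_nhdsLT (show (-1 : ℝ) < 1 by norm_num)] with x hx
    rw [artanh_eq_half_log (Ioo_subset_Icc_self hx),
      log_div (by linarith [hx.1]) (by linarith [hx.2])]
    ring
  simpa [g] using hg.tendsto.mono_left nhdsWithin_le_nhds |>.congr' heq

theorem abs_arctan_le_abs (x : ℝ) : |arctan x| ≤ |x| := by
  have := (convex_univ (𝕜 := ℝ) (E := ℝ)).norm_image_sub_le_of_norm_hasDerivWithin_le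
    (f := arctan) (C := 1) (fun x _ => (hasDerivAt_arctan x).hasDerivWithinAt) (fun y _ => ?_)
    (mem_univ 0) (mem_univ x)
  · simpa using this
  · rw [norm_eq_abs, abs_of_nonneg (by positivity), div_le_one (by positivity)]
    nlinarith [sq_nonneg y]

theorem arctan_one_sub_div_one_add {x : ℝ} (hx : -1 < x) :
    arctan ((1 - x) / (1 + x)) = π / 4 - arctan x := by
  have h : 0 < 1 + x := by linarith
  have hlt : x * ((1 - x) / (1 + x)) < 1 := by
    rw [mul_div_assoc', div_lt_one h]
    nlinarith [sq_nonneg x]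
  have hsum := arctan_add hlt
  rw [show (x + (1 - x) / (1 + x)) / (1 - x * ((1 - x) / (1 + x))) = 1 by
    rw [div_eq_one_iff_eq (sub_pos.2 hlt).ne']; field_simp; ring, arctan_one] at hsum
  linarith

noncomputable def inverseTangentIntegral (x : ℝ) : ℝ := ∫ u in 0..x, arctan u / u

theorem intervalIntegrable_arctan_div (a b : ℝ) :
    IntervalIntegrable (fun u => arctan u / u) volume a b := by
  refine (intervalIntegrable_const (c := (1 : ℝ))).mono_fun
    (continuous_arctan.measurable.div measurable_id).aestronglyMeasurable
    (ae_of_all _ fun u => ?_)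
  rcases eq_or_ne u 0 with rfl | hu
  · simp
  · simpa [abs_div, div_le_one (abs_pos.2 hu)] using abs_arctan_le_abs u

@[fun_prop]
theorem continuous_inverseTangentIntegral : Continuous inverseTangentIntegral :=
  intervalIntegral.continuous_primitive intervalIntegrable_arctan_div 0

theorem hasDerivAt_inverseTangentIntegral {x : ℝ} (hx : x ≠ 0) :
    HasDerivAt inverseTangentIntegral (arctan x / x) x :=
  intervalIntegral.integral_hasDerivAt_right (intervalIntegrable_arctan_div 0 x)
    (continuous_arctan.measurable.div measurable_id).stronglyMeasurable.stronglyMeasurableAtFilter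
    (continuous_arctan.continuousAt.div continuousAt_id hx)

@[simp]
theorem inverseTangentIntegral_zero : inverseTangentIntegral 0 = 0 := intervalIntegral.integral_same

theorem summable_one_div_two_mul_add_one_sq :
    Summable fun n : ℕ => 1 / (2 * (n : ℝ) + 1) ^ 2 := by
  refine ((summable_nat_add_iff 1).2 (summable_one_div_nat_pow.2 one_lt_two)).of_nonneg_of_le
    (fun n => by positivity) fun n => ?_
  gcongr
  push_cast
  linarith

theorem integral_Ioo_pow_two_mul_div {x : ℝ} (hx : 0 ≤ x) (n : ℕ) :
    ∫ u in Ioo 0 x, u ^ (2 * n) / (2 * n + 1) = x ^ (2 * n + 1) / (2 * n + 1) ^ 2 := by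
  rw [integral_div, ← integral_Ioc_eq_integral_Ioo, ← intervalIntegral.integral_of_le hx,
    integral_pow, zero_pow (Nat.succ_ne_zero _), sub_zero]
  push_cast
  field_simp

theorem hasSum_arctan_div {u : ℝ} (hu : ‖u‖ < 1) (hu₀ : u ≠ 0) :
    HasSum (fun n : ℕ => (-1) ^ n * (u ^ (2 * n) / (2 * n + 1))) (arctan u / u) := by
  refine ((hasSum_arctan hu).div_const u).congr_fun fun n => ?_
  push_cast
  field_simp
  ring

theorem hasSum_inverseTangentIntegral {x : ℝ} (hx : x ∈ Icc 0 1) :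
    HasSum (fun n : ℕ => (-1) ^ n * x ^ (2 * n + 1) / (2 * n + 1) ^ 2)
      (inverseTangentIntegral x) := by
  set F : ℕ → ℝ → ℝ := fun n u => (-1) ^ n * (u ^ (2 * n) / (2 * n + 1))
  have hF_int : ∀ n, Integrable (F n) (volume.restrict (Ioo 0 x)) := fun n =>
    (Continuous.integrableOn_Icc (by fun_prop)).mono_set Ioo_subset_Icc_self
  have hF_norm : ∀ n, ∫ u in Ioo 0 x, ‖F n u‖ = x ^ (2 * n + 1) / (2 * n + 1) ^ 2 := by
    intro n
    rw [← integral_Ioo_pow_two_mul_div hx.1]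
    refine integral_congr_ae (ae_of_all _ fun u => ?_)
    dsimp only [F]
    rw [norm_mul, norm_pow, norm_neg, norm_one, one_pow, one_mul,
      norm_of_nonneg (by rw [pow_mul]; positivity)]
  have hF_sum : Summable fun n => ∫ u in Ioo 0 x, ‖F n u‖ := by
    simp_rw [hF_norm]
    refine summable_one_div_two_mul_add_one_sq.of_nonneg_of_le
      (fun n => by have := hx.1; positivity) fun n => ?_
    gcongr
    exact pow_le_one₀ hx.1 hx.2
  have hsum : ∀ u ∈ Ioo 0 x, ∑' n, F n u = arctan u / u := fun u hu =>
    (hasSum_arctan_div (by rw [norm_of_nonneg hu.1.le]; exact hu.2.trans_le hx.2) hu.1.ne').tsum_eq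
  have := hasSum_integral_of_summable_integral_norm hF_int hF_sum
  rw [setIntegral_congr_fun measurableSet_Ioo hsum, ← integral_Ioc_eq_integral_Ioo,
    ← intervalIntegral.integral_of_le hx.1] at this
  simpa only [inverseTangentIntegral, F, MeasureTheory.integral_const_mul,
    integral_Ioo_pow_two_mul_div hx.1, mul_div_assoc] using this

theorem inverseTangentIntegral_one :
    inverseTangentIntegral 1 = ∑' n : ℕ, (-1 : ℝ) ^ n / (2 * n + 1) ^ 2 := by
  simpa using (hasSum_inverseTangentIntegral (right_mem_Icc.2 zero_le_one)).tsum_eq.symm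

end Real

namespace MeasureTheory

theorem integral_prod_of_nonneg {α β : Type*} [MeasurableSpace α] [MeasurableSpace β]
    {μ : Measure α} {ν : Measure β} [SFinite μ] [SFinite ν] {f : α × β → ℝ}
    (hf : 0 ≤ f) (hfm : AEStronglyMeasurable f (μ.prod ν))
    (hsec : ∀ᵐ x ∂μ, Integrable (fun y => f (x, y)) ν)
    (hint : Integrable (fun x => ∫ y, f (x, y) ∂ν) μ) :
    ∫ z, f z ∂μ.prod ν = ∫ x, ∫ y, f (x, y) ∂ν ∂μ :=
  integral_prod f <| (integrable_prod_iff hfm).2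
    ⟨hsec, by simpa only [norm_of_nonneg (hf _)] using hint⟩

end MeasureTheory

def unitTriangle : Set (ℝ × ℝ) := {p | 0 ≤ p.1 ∧ 0 ≤ p.2 ∧ 0 ≤ 1 - p.1 - p.2}

theorem measurableSet_unitTriangle : MeasurableSet unitTriangle := by
  unfold unitTriangle
  measurability

theorem indicator_unitTriangle_apply (f : ℝ × ℝ → ℝ) (x y : ℝ) :
    unitTriangle.indicator f (x, y) =
      (Icc 0 1).indicator (fun x => (Icc 0 (1 - x)).indicator (fun y => f (x, y)) y) x := by
  by_cases hx : x ∈ Icc 0 1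
  · by_cases hy : y ∈ Icc 0 (1 - x)
    · rw [indicator_of_mem hx, indicator_of_mem hy,
        indicator_of_mem (show (x, y) ∈ unitTriangle from ⟨hx.1, hy.1, by linarith [hy.2]⟩)]
    · rw [indicator_of_mem hx, indicator_of_notMem hy, indicator_of_notMem]
      exact fun h => hy ⟨h.2.1, by linarith [h.2.2]⟩
  · rw [indicator_of_notMem hx, indicator_of_notMem]
    exact fun h => hx ⟨h.1, by linarith [h.2.1, h.2.2]⟩

theorem setIntegral_unitTriangle {f : ℝ × ℝ → ℝ} (hfm : AEStronglyMeasurable f)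
    (hf : ∀ p ∈ unitTriangle, 0 ≤ f p)
    (hsec : ∀ x ∈ Ioo 0 1, IntegrableOn (fun y => f (x, y)) (Icc 0 (1 - x)))
    (hint : IntegrableOn (fun x => ∫ y in 0..1 - x, f (x, y)) (Ioo 0 1)) :
    ∫ p in unitTriangle, f p = ∫ x in Ioo 0 1, ∫ y in 0..1 - x, f (x, y) := by
  have hsection : ∀ x, ∫ y, unitTriangle.indicator f (x, y) =
      (Icc 0 1).indicator (fun x => ∫ y in 0..1 - x, f (x, y)) x := fun x => by
    simp_rw [indicator_unitTriangle_apply]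
    by_cases hx : x ∈ Icc 0 1
    · simp only [indicator_of_mem hx]
      rw [integral_indicator measurableSet_Icc, integral_Icc_eq_integral_Ioc,
        ← intervalIntegral.integral_of_le (by linarith [hx.2])]
    · simp [indicator_of_notMem hx]
  rw [← integral_indicator measurableSet_unitTriangle, Measure.volume_eq_prod,
    integral_prod_of_nonneg (indicator_nonneg hf)
      (by rw [← Measure.volume_eq_prod]; exact hfm.indicator measurableSet_unitTriangle) ?_ ?_]
  · simp_rw [hsection]
    rw [integral_indicator measurableSet_Icc, integral_Icc_eq_integral_Ioo]
  · filter_upwards [(Ioo_ae_eq_Icc (a := (0 : ℝ)) (b := 1)).symm.le] with x hx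
    simp_rw [indicator_unitTriangle_apply]
    by_cases hx' : x ∈ Icc 0 1
    · simp only [indicator_of_mem hx']
      exact (hsec x (hx hx')).integrable_indicator measurableSet_Icc
    · simp [indicator_of_notMem hx']
  · simp_rw [hsection]
    rw [integrable_indicator_iff measurableSet_Icc, integrableOn_Icc_iff_integrableOn_Ioo]
    exact hint

theorem integral_pow_four_div_sq_sub_sq_pow_three {a b : ℝ} (hb : |b| < a) :
    ∫ x in 0..b, x ^ 4 / (a ^ 2 - x ^ 2) ^ 3 =
      a ^ 2 * b / (4 * (a ^ 2 - b ^ 2) ^ 2) - 5 * b / (8 * (a ^ 2 - b ^ 2)) +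
        3 / (8 * a) * artanh (b / a) := by
  have ha : 0 < a := (abs_nonneg b).trans_lt hb
  have hsq : ∀ x, |x| < a → 0 < a ^ 2 - x ^ 2 := fun x hx => by
    nlinarith [sq_abs x, abs_nonneg x]
  have hmem : ∀ x ∈ uIcc 0 b, |x| < a := fun x hx => by
    simpa using (abs_sub_left_of_mem_uIcc hx).trans_lt (by simpa using hb)
  have hderiv : ∀ x, |x| < a → HasDerivAt
      (fun x => a ^ 2 * x / (4 * (a ^ 2 - x ^ 2) ^ 2) - 5 * x / (8 * (a ^ 2 - x ^ 2)) +
        3 / (8 * a) * artanh (x / a)) (x ^ 4 / (a ^ 2 - x ^ 2) ^ 3) x := by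
    intro x hx
    have hd := (hsq x hx).ne'
    have hxa : x / a ∈ Ioo (-1) 1 := by
      rw [mem_Ioo, lt_div_iff₀ ha, div_lt_iff₀ ha]
      constructor <;> linarith [abs_lt.1 hx]
    have hq : HasDerivAt (fun x => a ^ 2 - x ^ 2) (-(2 * x)) x := by
      simpa using (hasDerivAt_pow 2 x).const_sub (a ^ 2)
    have h₁ := ((hasDerivAt_id x).const_mul (a ^ 2)).div ((hq.pow 2).const_mul 4)
      (mul_ne_zero four_ne_zero (pow_ne_zero 2 hd))
    have h₂ := ((hasDerivAt_id x).const_mul 5).div (hq.const_mul 8) (mul_ne_zero (by norm_num) hd)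
    have h₃ := ((hasDerivAt_artanh hxa).comp x ((hasDerivAt_id x).div_const a)).const_mul
      (3 / (8 * a))
    refine ((h₁.sub h₂).add h₃).congr_deriv ?_
    have : 1 - (x / a) ^ 2 ≠ 0 := by rw [div_pow, one_sub_div (by positivity)]; positivity
    simp only [Pi.pow_apply, id_eq]
    field_simp
    ring
  rw [intervalIntegral.integral_eq_sub_of_hasDerivAt (fun x hx => hderiv x (hmem x hx))]
  · simp
  · exact (continuousOn_id.pow 4 |>.div (by fun_prop) fun x hx =>
      pow_ne_zero 3 (hsq x (hmem x hx)).ne').intervalIntegrable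

namespace SimplexIntegral

noncomputable def A (t : ℝ) : ℝ :=
  3 / 8 * arctan t - 5 / 8 * (t / (1 + t ^ 2)) + 9 / 4 * (t / (1 + t ^ 2) ^ 2) -
    3 * (t / (1 + t ^ 2) ^ 3) + 2 * (t / (1 + t ^ 2) ^ 4) - 3 * π / 32

theorem hasDerivAt_A (t : ℝ) : HasDerivAt A ((1 - t ^ 2) ^ 4 / (1 + t ^ 2) ^ 5) t := by
  have hs : 1 + t ^ 2 ≠ 0 := by positivity
  have hq : HasDerivAt (fun t : ℝ => 1 + t ^ 2) (2 * t) t := by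
    simpa using (hasDerivAt_pow 2 t).const_add 1
  have hdiv : ∀ k : ℕ, HasDerivAt (fun t : ℝ => t / (1 + t ^ 2) ^ k)
      ((1 * (1 + t ^ 2) ^ k - t * (k * (1 + t ^ 2) ^ (k - 1) * (2 * t))) /
        ((1 + t ^ 2) ^ k) ^ 2) t :=
    fun k => (hasDerivAt_id t).div (hq.pow k) (pow_ne_zero k hs)
  have := (((((hasDerivAt_arctan t).const_mul (3 / 8)).sub ((hdiv 1).const_mul (5 / 8))).add
    ((hdiv 2).const_mul (9 / 4))).sub ((hdiv 3).const_mul 3)).add ((hdiv 4).const_mul 2)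
    |>.sub_const (3 * π / 32)
  refine (this.congr_deriv ?_).congr_of_eventuallyEq (Eventually.of_forall fun t => ?_)
  · push_cast
    field_simp
    ring
  · simp [A]

theorem A_one : A 1 = 0 := by
  rw [A, arctan_one]
  ring

theorem A_eq (t : ℝ) :
    A t = 3 / 8 * (arctan t - π / 4) +
      (1 - t ^ 2) * (t * (5 + 2 * t ^ 2 + 5 * t ^ 4) / (8 * (1 + t ^ 2) ^ 4)) := by
  have : 1 + t ^ 2 ≠ 0 := by positivity
  rw [A]
  field_simp
  ring

theorem abs_A_le (t : ℝ) : |A t| ≤ |1 - t| := by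
  have := (convex_univ (𝕜 := ℝ) (E := ℝ)).norm_image_sub_le_of_norm_hasDerivWithin_le
    (f := A) (C := 1) (fun x _ => (hasDerivAt_A x).hasDerivWithinAt) (fun x _ => ?_)
    (mem_univ t) (mem_univ 1)
  · simpa [A_one] using this
  · have h₁ : |1 - x ^ 2| ≤ 1 + x ^ 2 := abs_le.2 ⟨by nlinarith, by nlinarith⟩
    have h₂ : 1 + x ^ 2 ≤ (1 + x ^ 2) ^ 5 := le_self_pow₀ (by nlinarith) (by norm_num)
    rw [norm_div, norm_pow, norm_pow, norm_of_nonneg (by positivity : 0 ≤ 1 + x ^ 2),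
      div_le_one (by positivity)]
    calc ‖1 - x ^ 2‖ ^ 4 ≤ (1 + x ^ 2) ^ 4 := pow_le_pow_left₀ (norm_nonneg _) h₁ 4
      _ ≤ (1 + x ^ 2) ^ 5 := pow_le_pow_right₀ (by nlinarith) (by norm_num)

theorem tendsto_A_mul_artanh : Tendsto (fun t => A t * artanh t) (𝓝[<] 1) (𝓝 0) :=
  squeeze_zero_norm (a := fun t => ‖(1 - t) * artanh t‖)
    (fun t => by
      simpa only [norm_mul, norm_eq_abs] using
        mul_le_mul_of_nonneg_right (abs_A_le t) (norm_nonneg (artanh t)))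
    (by simpa using tendsto_one_sub_mul_artanh_nhdsLT_one.norm)

noncomputable def Ψ (t : ℝ) : ℝ :=
  3 / 16 * inverseTangentIntegral ((1 - t) / (1 + t)) - 5 / 16 / (1 + t ^ 2) +
    1 / 4 / (1 + t ^ 2) ^ 2 - 1 / 6 / (1 + t ^ 2) ^ 3

theorem continuousOn_Ψ : ContinuousOn Ψ (Ioi (-1)) := by
  have : ∀ t ∈ Ioi (-1 : ℝ), 1 + t ≠ 0 := fun t ht => by linarith [mem_Ioi.1 ht]
  unfold Ψ
  fun_prop (disch := first | assumption | intros; positivity)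

theorem hasDerivAt_Ψ {t : ℝ} (ht : t ∈ Ioo (-1) 1) : HasDerivAt Ψ (A t / (1 - t ^ 2)) t := by
  have hp : 0 < 1 + t := by linarith [ht.1]
  have hm : 0 < 1 - t := by linarith [ht.2]
  have hs : 1 + t ^ 2 ≠ 0 := by positivity
  have hq : HasDerivAt (fun t : ℝ => 1 + t ^ 2) (2 * t) t := by
    simpa using (hasDerivAt_pow 2 t).const_add 1
  have hquot : HasDerivAt (fun t => (1 - t) / (1 + t))
      ((-1 * (1 + t) - (1 - t) * 1) / (1 + t) ^ 2) t :=
    ((hasDerivAt_id t).const_sub 1).div ((hasDerivAt_id t).const_add 1) hp.ne'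
  have hTi := (hasDerivAt_inverseTangentIntegral (div_pos hm hp).ne').comp t hquot
  have hinv : ∀ k : ℕ, HasDerivAt (fun t : ℝ => ((1 + t ^ 2) ^ k)⁻¹)
      (-(k * (1 + t ^ 2) ^ (k - 1) * (2 * t)) / ((1 + t ^ 2) ^ k) ^ 2) t :=
    fun k => (hq.pow k).inv (pow_ne_zero k hs)
  have := (((hTi.const_mul (3 / 16)).sub ((hinv 1).const_mul (5 / 16))).add
    ((hinv 2).const_mul (1 / 4))).sub ((hinv 3).const_mul (1 / 6))
  refine (this.congr_deriv ?_).congr_of_eventuallyEq (Eventually.of_forall fun t => ?_)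
  · rw [arctan_one_sub_div_one_add ht.1, A_eq]
    have : 1 - t ^ 2 ≠ 0 := by nlinarith
    push_cast
    field_simp
    ring
  · simp only [Ψ, Pi.add_apply, Pi.sub_apply, Function.comp_apply]
    ring

noncomputable def G (t : ℝ) : ℝ := A t * artanh t - Ψ t

theorem hasDerivAt_G {t : ℝ} (ht : t ∈ Ioo (-1) 1) :
    HasDerivAt G ((1 - t ^ 2) ^ 4 / (1 + t ^ 2) ^ 5 * artanh t) t := by
  refine (((hasDerivAt_A t).mul (hasDerivAt_artanh ht)).sub (hasDerivAt_Ψ ht)).congr_deriv ?_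
  ring

theorem continuousOn_G : ContinuousOn G (Ioc (-1) 1) := by
  intro t ht
  rcases eq_or_lt_of_le ht.2 with rfl | ht₁
  · have hΨ : ContinuousAt Ψ 1 :=
      continuousOn_Ψ.continuousAt (Ioi_mem_nhds (by norm_num))
    have hleft : ContinuousWithinAt G (Iio 1) 1 := by
      simpa [ContinuousWithinAt, G, A_one] using (show Tendsto G _ _ from
        tendsto_A_mul_artanh.sub (hΨ.tendsto.mono_left nhdsWithin_le_nhds))
    exact (continuousWithinAt_Iio_iff_Iic.1 hleft).mono fun x hx => hx.2
  · exact ((hasDerivAt_G ⟨ht.1, ht₁⟩).continuousAt).continuousWithinAt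

theorem G_zero : G 0 = 11 / 48 - 3 / 16 * ∑' n : ℕ, (-1 : ℝ) ^ n / (2 * n + 1) ^ 2 := by
  norm_num [G, A, Ψ, inverseTangentIntegral_one]
  ring

theorem G_one : G 1 = 11 / 96 := by
  norm_num [G, A_one, Ψ]

noncomputable def tanHalfArccos (x : ℝ) : ℝ := √((1 - x) / (1 + x))

section tanHalfArccos

variable {x : ℝ}

theorem tanHalfArccos_sq (hx : x ∈ Ioc (-1) 1) : tanHalfArccos x ^ 2 = (1 - x) / (1 + x) :=
  sq_sqrt (div_nonneg (by linarith [hx.2]) (by linarith [hx.1]))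

theorem sqrt_one_sub_sq_eq_tanHalfArccos_mul (hx : x ∈ Ioc (-1) 1) :
    √(1 - x ^ 2) = tanHalfArccos x * (1 + x) := by
  have hp : 0 < 1 + x := by linarith [hx.1]
  rw [show 1 - x ^ 2 = (1 - x) / (1 + x) * (1 + x) ^ 2 by field_simp; ring,
    sqrt_mul (div_nonneg (by linarith [hx.2]) hp.le), sqrt_sq hp.le, tanHalfArccos]

theorem tanHalfArccos_pos (hx : x ∈ Ioo (-1) 1) : 0 < tanHalfArccos x :=
  sqrt_pos.2 (div_pos (by linarith [hx.2]) (by linarith [hx.1]))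

theorem one_sub_div_sqrt_one_sub_sq_eq_tanHalfArccos (hx : x ∈ Ioo (-1) 1) :
    (1 - x) / √(1 - x ^ 2) = tanHalfArccos x := by
  have hτ := tanHalfArccos_pos hx
  have hp : 0 < 1 + x := by linarith [hx.1]
  rw [sqrt_one_sub_sq_eq_tanHalfArccos_mul (Ioo_subset_Ioc_self hx), div_eq_iff (by positivity),
    ← mul_assoc, ← sq, tanHalfArccos_sq (Ioo_subset_Ioc_self hx)]
  field_simp

theorem tanHalfArccos_mem_Icc (hx : x ∈ Icc 0 1) : tanHalfArccos x ∈ Icc 0 1 :=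
  ⟨sqrt_nonneg _, sqrt_le_one.2 (div_le_one_of_le₀ (by linarith [hx.1]) (by linarith [hx.1]))⟩

theorem tanHalfArccos_lt_one (hx : x ∈ Ioo 0 1) : tanHalfArccos x < 1 :=
  (sqrt_lt' one_pos).2 (by rw [one_pow, div_lt_one (by linarith [hx.1])]; linarith [hx.1])

theorem continuousOn_tanHalfArccos : ContinuousOn tanHalfArccos (Ioi (-1)) := by
  have : ∀ t ∈ Ioi (-1 : ℝ), 1 + t ≠ 0 := fun t ht => by linarith [mem_Ioi.1 ht]
  unfold tanHalfArccos
  fun_prop (disch := assumption)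

theorem hasDerivAt_tanHalfArccos (hx : x ∈ Ioo (-1) 1) :
    HasDerivAt tanHalfArccos (-1 / (tanHalfArccos x * (1 + x) ^ 2)) x := by
  have hp : 0 < 1 + x := by linarith [hx.1]
  have hquot : HasDerivAt (fun x => (1 - x) / (1 + x))
      ((-1 * (1 + x) - (1 - x) * 1) / (1 + x) ^ 2) x :=
    ((hasDerivAt_id x).const_sub 1).div ((hasDerivAt_id x).const_add 1) hp.ne'
  have hτ := tanHalfArccos_pos hx
  refine ((hasDerivAt_sqrt (div_pos (by linarith [hx.2]) hp).ne').comp x hquot).congr_deriv ?_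
  rw [← tanHalfArccos]
  field_simp
  ring

@[simp] theorem tanHalfArccos_zero : tanHalfArccos 0 = 1 := by simp [tanHalfArccos]

@[simp] theorem tanHalfArccos_one : tanHalfArccos 1 = 0 := by simp [tanHalfArccos]

end tanHalfArccos

noncomputable def sectionIntegral (x : ℝ) : ℝ :=
  x ^ 2 / 16 - x ^ 3 / 4 + 3 / 8 * x ^ 4 * artanh (tanHalfArccos x) / √(1 - x ^ 2)

noncomputable def sectionPrimitive (x : ℝ) : ℝ :=
  x ^ 3 / 48 - x ^ 4 / 16 - 3 / 4 * G (tanHalfArccos x)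

theorem hasDerivAt_sectionPrimitive {x : ℝ} (hx : x ∈ Ioo 0 1) :
    HasDerivAt sectionPrimitive (sectionIntegral x) x := by
  have hx' : x ∈ Ioo (-1) 1 := ⟨by linarith [hx.1], hx.2⟩
  set τ := tanHalfArccos x with hτ_def
  have hτ : τ ∈ Ioo (-1) 1 := ⟨by linarith [tanHalfArccos_pos hx'], tanHalfArccos_lt_one hx⟩
  have hτ₀ := tanHalfArccos_pos hx'
  have hsq := tanHalfArccos_sq (Ioo_subset_Ioc_self hx')
  have hp : 0 < 1 + x := by linarith [hx.1]
  have hpoly : HasDerivAt (fun x : ℝ => x ^ 3 / 48 - x ^ 4 / 16)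
      ((3 : ℕ) * x ^ 2 / 48 - (4 : ℕ) * x ^ 3 / 16) x :=
    ((hasDerivAt_pow 3 x).div_const 48).sub ((hasDerivAt_pow 4 x).div_const 16)
  refine (hpoly.sub (((hasDerivAt_G hτ).comp x (hasDerivAt_tanHalfArccos hx')).const_mul
    (3 / 4))).congr_deriv ?_
  have e₁ : 1 - τ ^ 2 = 2 * x / (1 + x) := by rw [hsq]; field_simp; ring
  have e₂ : 1 + τ ^ 2 = 2 / (1 + x) := by rw [hsq]; field_simp; ring
  rw [sectionIntegral, sqrt_one_sub_sq_eq_tanHalfArccos_mul (Ioo_subset_Ioc_self hx'), ← hτ_def,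
    e₁, e₂]
  push_cast
  field_simp
  ring

theorem continuousOn_sectionPrimitive : ContinuousOn sectionPrimitive (Icc 0 1) := by
  have hG : ContinuousOn (fun x => G (tanHalfArccos x)) (Icc 0 1) :=
    (continuousOn_G.mono fun t (ht : t ∈ Icc 0 1) => ⟨by linarith [ht.1], ht.2⟩).comp
      (continuousOn_tanHalfArccos.mono fun x (hx : x ∈ Icc 0 1) => show -1 < x by linarith [hx.1])
      fun x hx => tanHalfArccos_mem_Icc hx
  unfold sectionPrimitive
  fun_prop

theorem sectionPrimitive_one_sub_zero :
    sectionPrimitive 1 - sectionPrimitive 0 =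
      -49 / 384 + 9 / 64 * ∑' n : ℕ, (-1 : ℝ) ^ n / (2 * n + 1) ^ 2 := by
  rw [sectionPrimitive, sectionPrimitive, tanHalfArccos_one, tanHalfArccos_zero, G_one, G_zero]
  ring

theorem integrableOn_section {x : ℝ} (hx : x ∈ Ioo 0 1) :
    IntegrableOn (fun y => x ^ 4 * y ^ 4 / (1 - x ^ 2 - y ^ 2) ^ 3) (Icc 0 (1 - x)) :=
  ContinuousOn.integrableOn_Icc <| ContinuousOn.div (by fun_prop) (by fun_prop) fun y hy =>
    pow_ne_zero 3 (by nlinarith [hx.1, hx.2, hy.1, hy.2])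

theorem integral_section_eq_sectionIntegral {x : ℝ} (hx : x ∈ Ioo 0 1) :
    ∫ y in 0..1 - x, x ^ 4 * y ^ 4 / (1 - x ^ 2 - y ^ 2) ^ 3 = sectionIntegral x := by
  have hx' : x ∈ Ioo (-1) 1 := ⟨by linarith [hx.1], hx.2⟩
  have hpos : 0 < 1 - x ^ 2 := by nlinarith [hx.1, hx.2]
  have ha : √(1 - x ^ 2) ^ 2 = 1 - x ^ 2 := sq_sqrt hpos.le
  have hb : |1 - x| < √(1 - x ^ 2) := by
    rw [abs_of_pos (by linarith [hx.2]), lt_sqrt (by linarith [hx.2])]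
    nlinarith [hx.1, hx.2]
  have hrw : ∀ y : ℝ, x ^ 4 * y ^ 4 / (1 - x ^ 2 - y ^ 2) ^ 3 =
      x ^ 4 * (y ^ 4 / (√(1 - x ^ 2) ^ 2 - y ^ 2) ^ 3) := fun y => by
    rw [ha, mul_div_assoc]
  simp_rw [hrw]
  rw [intervalIntegral.integral_const_mul, integral_pow_four_div_sq_sub_sq_pow_three hb,
    one_sub_div_sqrt_one_sub_sq_eq_tanHalfArccos hx', ha, sectionIntegral]
  have : 1 - x ^ 2 - (1 - x) ^ 2 ≠ 0 := by nlinarith [hx.1, hx.2]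
  have : √(1 - x ^ 2) ≠ 0 := by positivity
  have : x ≠ 0 := hx.1.ne'
  field_simp
  ring

theorem sectionIntegral_nonneg {x : ℝ} (hx : x ∈ Ioo 0 1) : 0 ≤ sectionIntegral x := by
  rw [← integral_section_eq_sectionIntegral hx]
  refine intervalIntegral.integral_nonneg (by linarith [hx.2]) fun y hy => ?_
  have : 0 ≤ 1 - x ^ 2 - y ^ 2 := by nlinarith [hx.1, hx.2, hy.1, hy.2]
  positivity

theorem integrableOn_sectionIntegral : IntegrableOn sectionIntegral (Ioc 0 1) :=
  intervalIntegral.integrableOn_deriv_of_nonneg continuousOn_sectionPrimitive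
    (fun _ hx => hasDerivAt_sectionPrimitive hx) fun _ hx => sectionIntegral_nonneg hx

theorem integral_sectionIntegral :
    ∫ x in Ioo 0 1, sectionIntegral x =
      -49 / 384 + 9 / 64 * ∑' n : ℕ, (-1 : ℝ) ^ n / (2 * n + 1) ^ 2 := by
  rw [← integral_Ioc_eq_integral_Ioo, ← intervalIntegral.integral_of_le zero_le_one,
    intervalIntegral.integral_eq_sub_of_hasDerivAt_of_le zero_le_one
      continuousOn_sectionPrimitive (fun _ hx => hasDerivAt_sectionPrimitive hx)
      ((intervalIntegrable_iff_integrableOn_Ioc_of_le zero_le_one).2 integrableOn_sectionIntegral),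
    sectionPrimitive_one_sub_zero]

end SimplexIntegral

open SimplexIntegral

/-- `∫_Δ x⁴y⁴/(1-x²-y²)³ dxdy = -49/384 + (9/64)·G`, where `G` is the Catalan constant. -/
theorem integral_simplex_x4y4_cube :
    ∫ p : ℝ × ℝ in {p : ℝ × ℝ | 0 ≤ p.1 ∧ 0 ≤ p.2 ∧ 0 ≤ 1 - p.1 - p.2},
        p.1 ^ 4 * p.2 ^ 4 / (1 - p.1 ^ 2 - p.2 ^ 2) ^ 3 =
      -49 / 384 + (9 / 64) * ∑' n : ℕ, (-1 : ℝ) ^ n / (2 * n + 1) ^ 2 := by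
  have hnonneg : ∀ p ∈ unitTriangle, 0 ≤ p.1 ^ 4 * p.2 ^ 4 / (1 - p.1 ^ 2 - p.2 ^ 2) ^ 3 :=
    fun p ⟨h₁, h₂, h₃⟩ => by
      have : 0 ≤ 1 - p.1 ^ 2 - p.2 ^ 2 := by nlinarith
      positivity
  have hint : IntegrableOn
      (fun x => ∫ y in 0..1 - x, x ^ 4 * y ^ 4 / (1 - x ^ 2 - y ^ 2) ^ 3) (Ioo 0 1) :=
    (integrableOn_sectionIntegral.mono_set Ioo_subset_Ioc_self).congr_fun
      (fun x hx => (integral_section_eq_sectionIntegral hx).symm) measurableSet_Ioo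
  change ∫ p in unitTriangle, p.1 ^ 4 * p.2 ^ 4 / (1 - p.1 ^ 2 - p.2 ^ 2) ^ 3 = _
  rw [setIntegral_unitTriangle (Measurable.aestronglyMeasurable (by fun_prop)) hnonneg
      (fun x hx => integrableOn_section hx) hint,
    setIntegral_congr_fun measurableSet_Ioo fun x hx => integral_section_eq_sectionIntegral hx,
    integral_sectionIntegral]
end

section
/- Let σ be the automorphism of ℚ[x,y] with σ(x) = -y, σ(y) = x. Define φ_{m,n} = x^m y^n + x^n y^m and ψ_{m,n} = x^m y^n - x^n y^m. Then the collection {φ_{m,n} : m ≥ n ≥ 0, m even, n even} ∪ {ψ_{m,n} : m > n > 0, m odd, n odd} is a ℚ-vector space basis of the subspace of σ-invariant polynomials in ℚ[x,y]. -/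
/-!
Since `σ (x^a y^b) = (-1)^a x^b y^a`, the orbit sum `(1 + σ + σ² + σ³) (x^a y^b)` vanishes when
`a + b` is odd and equals `2 φ_{a,b}` resp. `2 ψ_{a,b}` when `a, b` are both even resp. both odd.
A `σ`-invariant `F` is a quarter of its own orbit sum, hence lies in the span of the family.
For independence, the coefficient of `x^m y^n` with `m ≥ n` is nonzero in the member of the family
indexed by `(m, n)` and zero in every other member.
-/

open MvPolynomial

/-- `φ_{m,n} = x^m y^n + x^n y^m`. -/
noncomputable def phiPoly (m n : ℕ) : MvPolynomial (Fin 2) ℚ :=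
  X 0 ^ m * X 1 ^ n + X 0 ^ n * X 1 ^ m

/-- `ψ_{m,n} = x^m y^n - x^n y^m`. -/
noncomputable def psiPoly (m n : ℕ) : MvPolynomial (Fin 2) ℚ :=
  X 0 ^ m * X 1 ^ n - X 0 ^ n * X 1 ^ m

/-- Index for the family: pairs `m ≥ n ≥ 0` both even (for `φ`), and
pairs `m > n > 0` both odd (for `ψ`). -/
noncomputable def sigmaBasisFamily :
    ({p : ℕ × ℕ // p.2 ≤ p.1 ∧ Even p.1 ∧ Even p.2} ⊕
      {p : ℕ × ℕ // p.2 < p.1 ∧ 0 < p.2 ∧ Odd p.1 ∧ Odd p.2}) →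
    MvPolynomial (Fin 2) ℚ :=
  Sum.elim (fun s => phiPoly s.1.1 s.1.2) (fun s => psiPoly s.1.1 s.1.2)

theorem LinearIndependent.of_pairwise_dual_eq_zero {K V ι : Type*} [Field K] [AddCommGroup V]
    [Module K V] (v : ι → V) (f : ι → Module.Dual K V) (h₀ : Pairwise fun i j ↦ f i (v j) = 0)
    (h₁ : ∀ i, f i (v i) ≠ 0) : LinearIndependent K v :=
  .of_pairwise_dual_eq_zero_one v (fun i ↦ (f i (v i))⁻¹ • f i) (fun i j hij ↦ by simp [h₀ hij])
    fun i ↦ by simp [h₁ i]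

noncomputable def expPair (a b : ℕ) : Fin 2 →₀ ℕ :=
  Finsupp.single 0 a + Finsupp.single 1 b

lemma expPair_inj {a b c d : ℕ} : expPair a b = expPair c d ↔ a = c ∧ b = d := by
  refine ⟨fun h => ⟨?_, ?_⟩, fun ⟨hac, hbd⟩ => hac ▸ hbd ▸ rfl⟩
  · simpa [expPair] using DFunLike.congr_fun h 0
  · simpa [expPair] using DFunLike.congr_fun h 1

lemma expPair_apply_eq (d : Fin 2 →₀ ℕ) : expPair (d 0) (d 1) = d := by
  ext i; fin_cases i <;> simp [expPair]

lemma X_pow_mul_X_pow_eq_monomial {R : Type*} [CommSemiring R] (a b : ℕ) :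
    (X 0 ^ a * X 1 ^ b : MvPolynomial (Fin 2) R) = monomial (expPair a b) 1 := by
  rw [X_pow_eq_monomial, X_pow_eq_monomial, monomial_mul, one_mul, expPair]

section QuarterTurn

variable (R : Type*) [CommRing R]

noncomputable def quarterTurn : MvPolynomial (Fin 2) R →ₐ[R] MvPolynomial (Fin 2) R :=
  aeval ![-X 1, X 0]

noncomputable def quarterTurnOrbitSum : Module.End R (MvPolynomial (Fin 2) R) :=
  let σ := (quarterTurn R).toLinearMap
  1 + σ + σ ^ 2 + σ ^ 3

variable {R}

lemma quarterTurn_X_pow_mul_X_pow (a b : ℕ) :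
    quarterTurn R (X 0 ^ a * X 1 ^ b) = (-1 : R) ^ a • (X 0 ^ b * X 1 ^ a) := by
  simp only [quarterTurn, map_mul, map_pow, aeval_X, Matrix.cons_val_zero, Matrix.cons_val_one,
    Matrix.cons_val_fin_one, smul_eq_C_mul, map_neg, map_one]
  rw [neg_pow]
  ring

lemma quarterTurnOrbitSum_X_pow_mul_X_pow (a b : ℕ) :
    quarterTurnOrbitSum R (X 0 ^ a * X 1 ^ b) =
      (1 + (-1) ^ (a + b) : R) • (X 0 ^ a * X 1 ^ b) +
        ((-1) ^ a + (-1) ^ b : R) • (X 0 ^ b * X 1 ^ a) := by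
  have hsq : ((-1 : R) ^ a) ^ 2 = 1 := by rw [← pow_mul, pow_mul', neg_one_sq, one_pow]
  simp only [quarterTurnOrbitSum, pow_succ, pow_zero, LinearMap.add_apply, Module.End.mul_apply,
    Module.End.one_apply, AlgHom.toLinearMap_apply, map_smul, quarterTurn_X_pow_mul_X_pow]
  match_scalars
  · ring
  · linear_combination (-1 : R) ^ b * hsq

lemma quarterTurnOrbitSum_of_quarterTurn_eq {F : MvPolynomial (Fin 2) R}
    (hF : quarterTurn R F = F) : quarterTurnOrbitSum R F = (4 : R) • F := by
  simp only [quarterTurnOrbitSum, pow_succ, pow_zero, one_mul, LinearMap.add_apply,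
    Module.End.one_apply, Module.End.mul_apply, AlgHom.toLinearMap_apply, hF]
  module

end QuarterTurn

lemma phiPoly_comm (a b : ℕ) : phiPoly a b = phiPoly b a :=
  add_comm _ _

lemma psiPoly_comm (a b : ℕ) : psiPoly a b = -psiPoly b a :=
  (neg_sub _ _).symm

lemma quarterTurn_phiPoly {a b : ℕ} (ha : Even a) (hb : Even b) :
    quarterTurn ℚ (phiPoly a b) = phiPoly a b := by
  rw [phiPoly, map_add, quarterTurn_X_pow_mul_X_pow, quarterTurn_X_pow_mul_X_pow, ha.neg_one_pow,
    hb.neg_one_pow, one_smul, one_smul, add_comm]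

lemma quarterTurn_psiPoly {a b : ℕ} (ha : Odd a) (hb : Odd b) :
    quarterTurn ℚ (psiPoly a b) = psiPoly a b := by
  rw [psiPoly, map_sub, quarterTurn_X_pow_mul_X_pow, quarterTurn_X_pow_mul_X_pow, ha.neg_one_pow,
    hb.neg_one_pow]
  module

lemma span_sigmaBasisFamily_le_eqLocus :
    Submodule.span ℚ (Set.range sigmaBasisFamily) ≤
      LinearMap.eqLocus (quarterTurn ℚ).toLinearMap LinearMap.id := by
  rw [Submodule.span_le]
  rintro _ ⟨⟨⟨m, n⟩, -, hm, hn⟩ | ⟨⟨m, n⟩, -, -, hm, hn⟩, rfl⟩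
  · exact quarterTurn_phiPoly hm hn
  · exact quarterTurn_psiPoly hm hn

lemma phiPoly_mem_span {a b : ℕ} (ha : Even a) (hb : Even b) :
    phiPoly a b ∈ Submodule.span ℚ (Set.range sigmaBasisFamily) := by
  rcases le_total b a with hba | hab
  · exact Submodule.subset_span ⟨.inl ⟨(a, b), hba, ha, hb⟩, rfl⟩
  · rw [phiPoly_comm]
    exact Submodule.subset_span ⟨.inl ⟨(b, a), hab, hb, ha⟩, rfl⟩

lemma psiPoly_mem_span {a b : ℕ} (ha : Odd a) (hb : Odd b) :
    psiPoly a b ∈ Submodule.span ℚ (Set.range sigmaBasisFamily) := by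
  rcases lt_trichotomy b a with hba | rfl | hab
  · exact Submodule.subset_span ⟨.inr ⟨(a, b), hba, hb.pos, ha, hb⟩, rfl⟩
  · simp [psiPoly]
  · rw [psiPoly_comm]
    exact Submodule.neg_mem _ (Submodule.subset_span ⟨.inr ⟨(b, a), hab, ha.pos, hb, ha⟩, rfl⟩)

lemma quarterTurnOrbitSum_X_pow_mul_X_pow_mem_span (a b : ℕ) :
    quarterTurnOrbitSum ℚ (X 0 ^ a * X 1 ^ b) ∈ Submodule.span ℚ (Set.range sigmaBasisFamily) := by
  rw [quarterTurnOrbitSum_X_pow_mul_X_pow]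
  rcases Nat.even_or_odd a with ha | ha <;> rcases Nat.even_or_odd b with hb | hb
  · rw [(ha.add hb).neg_one_pow, ha.neg_one_pow, hb.neg_one_pow, ← smul_add]
    exact Submodule.smul_mem _ _ (phiPoly_mem_span ha hb)
  · simp [(ha.add_odd hb).neg_one_pow, ha.neg_one_pow, hb.neg_one_pow]
  · simp [(ha.add_even hb).neg_one_pow, ha.neg_one_pow, hb.neg_one_pow]
  · have h : (1 + (-1) ^ (a + b) : ℚ) • (X 0 ^ a * X 1 ^ b) +
        ((-1) ^ a + (-1) ^ b : ℚ) • (X 0 ^ b * X 1 ^ a) = (2 : ℚ) • psiPoly a b := by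
      rw [(ha.add_odd hb).neg_one_pow, ha.neg_one_pow, hb.neg_one_pow, psiPoly]
      module
    rw [h]
    exact Submodule.smul_mem _ _ (psiPoly_mem_span ha hb)

lemma quarterTurnOrbitSum_mem_span (F : MvPolynomial (Fin 2) ℚ) :
    quarterTurnOrbitSum ℚ F ∈ Submodule.span ℚ (Set.range sigmaBasisFamily) := by
  induction F using MvPolynomial.induction_on' with
  | monomial d c =>
    rw [← expPair_apply_eq d, ← mul_one c, ← smul_eq_mul, ← smul_monomial,
      ← X_pow_mul_X_pow_eq_monomial, map_smul]
    exact Submodule.smul_mem _ _ (quarterTurnOrbitSum_X_pow_mul_X_pow_mem_span _ _)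
  | add p q hp hq => exact map_add (quarterTurnOrbitSum ℚ) p q ▸ Submodule.add_mem _ hp hq

lemma mem_span_of_quarterTurn_eq {F : MvPolynomial (Fin 2) ℚ} (hF : quarterTurn ℚ F = F) :
    F ∈ Submodule.span ℚ (Set.range sigmaBasisFamily) := by
  have h := Submodule.smul_mem _ (4 : ℚ)⁻¹ (quarterTurnOrbitSum_mem_span F)
  rwa [quarterTurnOrbitSum_of_quarterTurn_eq hF, inv_smul_smul₀ four_ne_zero] at h

lemma coeff_phiPoly (a b : ℕ) (e : Fin 2 →₀ ℕ) :
    coeff e (phiPoly a b) =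
      (if expPair a b = e then (1 : ℚ) else 0) + if expPair b a = e then 1 else 0 := by
  rw [phiPoly, coeff_add, X_pow_mul_X_pow_eq_monomial, X_pow_mul_X_pow_eq_monomial, coeff_monomial,
    coeff_monomial]

lemma coeff_psiPoly (a b : ℕ) (e : Fin 2 →₀ ℕ) :
    coeff e (psiPoly a b) =
      (if expPair a b = e then (1 : ℚ) else 0) - if expPair b a = e then 1 else 0 := by
  rw [psiPoly, coeff_sub, X_pow_mul_X_pow_eq_monomial, X_pow_mul_X_pow_eq_monomial, coeff_monomial,
    coeff_monomial]

def sigmaBasisExp :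
    ({p : ℕ × ℕ // p.2 ≤ p.1 ∧ Even p.1 ∧ Even p.2} ⊕
      {p : ℕ × ℕ // p.2 < p.1 ∧ 0 < p.2 ∧ Odd p.1 ∧ Odd p.2}) → ℕ × ℕ :=
  Sum.elim Subtype.val Subtype.val

lemma sigmaBasisExp_injective : Function.Injective sigmaBasisExp := by
  rintro (⟨p, -, hp, -⟩ | ⟨p, -, -, hp, -⟩) (⟨q, -, hq, -⟩ | ⟨q, -, -, hq, -⟩) (h : p = q)
  all_goals subst h
  · rfl
  · exact absurd hq (Nat.not_odd_iff_even.2 hp)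
  · exact absurd hp (Nat.not_odd_iff_even.2 hq)
  · rfl

lemma sigmaBasisExp_snd_le_fst (i) : (sigmaBasisExp i).2 ≤ (sigmaBasisExp i).1 := by
  rcases i with ⟨p, hp, -⟩ | ⟨p, hp, -⟩
  exacts [hp, hp.le]

lemma coeff_sigmaBasisFamily_self (i) :
    coeff (expPair (sigmaBasisExp i).1 (sigmaBasisExp i).2) (sigmaBasisFamily i) ≠ 0 := by
  rcases i with ⟨⟨m, n⟩, -⟩ | ⟨⟨m, n⟩, hnm, -⟩
  · simp only [sigmaBasisExp, sigmaBasisFamily, Sum.elim_inl, coeff_phiPoly]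
    split_ifs <;> norm_num
  · have hmn : expPair n m ≠ expPair m n := fun h ↦ hnm.ne (expPair_inj.1 h).1
    simp [sigmaBasisExp, sigmaBasisFamily, coeff_psiPoly, hmn]

lemma coeff_sigmaBasisFamily_eq_zero {j} {e : Fin 2 →₀ ℕ}
    (h₁ : e ≠ expPair (sigmaBasisExp j).1 (sigmaBasisExp j).2)
    (h₂ : e ≠ expPair (sigmaBasisExp j).2 (sigmaBasisExp j).1) :
    coeff e (sigmaBasisFamily j) = 0 := by
  cases j <;> dsimp only [sigmaBasisExp, Sum.elim_inl, Sum.elim_inr] at h₁ h₂ <;>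
    simp [sigmaBasisFamily, coeff_phiPoly, coeff_psiPoly, h₁.symm, h₂.symm]

lemma eq_of_coeff_sigmaBasisFamily_ne_zero {i j}
    (h : coeff (expPair (sigmaBasisExp i).1 (sigmaBasisExp i).2) (sigmaBasisFamily j) ≠ 0) :
    i = j := by
  have hi := sigmaBasisExp_snd_le_fst i
  have hj := sigmaBasisExp_snd_le_fst j
  by_contra hne
  refine h (coeff_sigmaBasisFamily_eq_zero (fun h' ↦ hne ?_) (fun h' ↦ hne ?_)) <;>
    obtain ⟨h₁, h₂⟩ := expPair_inj.1 h' <;>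
    exact sigmaBasisExp_injective (Prod.ext (by omega) (by omega))

lemma linearIndependent_sigmaBasisFamily : LinearIndependent ℚ sigmaBasisFamily :=
  .of_pairwise_dual_eq_zero _ (fun i ↦ lcoeff ℚ (expPair (sigmaBasisExp i).1 (sigmaBasisExp i).2))
    (fun _ _ hij ↦ by_contra fun h ↦ hij (eq_of_coeff_sigmaBasisFamily_ne_zero h))
    coeff_sigmaBasisFamily_self

/-- The family `{φ_{m,n} : m ≥ n ≥ 0 even} ∪ {ψ_{m,n} : m > n > 0 odd}` is a ℚ-basis of the
space of `σ`-invariant polynomials, where `σ(x) = -y`, `σ(y) = x`: it is linearly independent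
and spans exactly the `σ`-invariants. -/
theorem sigma_invariants_basis :
    LinearIndependent ℚ sigmaBasisFamily ∧
    (Submodule.span ℚ (Set.range sigmaBasisFamily) : Set (MvPolynomial (Fin 2) ℚ)) =
      {F | aeval ![-(X 1 : MvPolynomial (Fin 2) ℚ), X 0] F = F} :=
  ⟨linearIndependent_sigmaBasisFamily, Set.Subset.antisymm
    (fun _ hF ↦ span_sigmaBasisFamily_le_eqLocus hF) fun _ hF ↦ mem_span_of_quarterTurn_eq hF⟩
end

section
/- Let k ≥ 1 be an integer and z = x+iy, w = x-iy so that zw = x²+y². Then ∫_Δ ((x²+y²)^k - 1)/(1-x²-y²) dx dy = -(1/2) ∫₀¹ ∑_{j=0}^{k-1} (2y²-2y+1)^j/(j+1) dy. In particular, this integral is a rational number whose denominator divides 2·L_k·L_{2k-1}, where L_m = lcm(1,...,m). -/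
/-!
Off the corners `(1,0)` and `(0,1)` of `Δ` we have `x² + y² ≠ 1`, so the integrand is
`-∑_{j<k} (x² + y²)^j` almost everywhere. Since `(x² + y²)^j` is homogeneous of degree `2j`, its
integral over `Δ` is `1/(2j+2)` times its integral along the hypotenuse, `∫₀¹ (y² + (1-y)²)^j dy`;
after binomial expansion this is the recursion `B(a, b+1) = (b+1)/(a+b+2) · B(a, b)` for
`B(a, b) = ∫₀¹ xᵃ (1-x)ᵇ dx`. Rationality: the hypotenuse integral is a sum of `B(2i, 2l)` with
`i + l = j < k`, and `B(a, b) = ∑ₘ (-1)ᵐ C(b,m)/(a+m+1)` has denominators at most `2k - 1`, while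
`1/(2j+2)` contributes `2` and `j + 1 ≤ k`.
-/

open MeasureTheory

/-- `L_m = lcm(1, …, m)`. -/
def lcmUpTo (m : ℕ) : ℕ := (Finset.Icc 1 m).lcm id

open Finset

/-- `∫₀¹ xᵃ (1-x)ᵇ dx`, which is Euler's `B(a+1, b+1)`. -/
noncomputable def betaInt (a b : ℕ) : ℝ := ∫ x in (0 : ℝ)..1, x ^ a * (1 - x) ^ b

lemma intervalIntegrable_pow_mul_one_sub_pow (a b : ℕ) :
    IntervalIntegrable (fun x : ℝ => x ^ a * (1 - x) ^ b) volume 0 1 :=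
  (by fun_prop : Continuous _).intervalIntegrable 0 1

lemma betaInt_eq_add (a b : ℕ) : betaInt a b = betaInt a (b + 1) + betaInt (a + 1) b := by
  rw [betaInt, betaInt, betaInt, ← intervalIntegral.integral_add
    (intervalIntegrable_pow_mul_one_sub_pow _ _) (intervalIntegrable_pow_mul_one_sub_pow _ _)]
  exact intervalIntegral.integral_congr fun x _ => by ring

lemma betaInt_parts (a b : ℕ) :
    ((a : ℝ) + 1) * betaInt a (b + 1) = ((b : ℝ) + 1) * betaInt (a + 1) b := by
  have hderiv : ∀ x ∈ Set.uIcc (0 : ℝ) 1,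
      HasDerivAt (fun x : ℝ => x ^ (a + 1) * (1 - x) ^ (b + 1))
        (((a : ℝ) + 1) * (x ^ a * (1 - x) ^ (b + 1)) -
          ((b : ℝ) + 1) * (x ^ (a + 1) * (1 - x) ^ b)) x := by
    intro x _
    refine ((hasDerivAt_pow (a + 1) x).fun_mul
      (((hasDerivAt_id' x).const_sub 1).fun_pow (b + 1))).congr_deriv ?_
    simp only [Nat.cast_add, Nat.cast_one, Nat.add_sub_cancel]
    ring
  have hftc := intervalIntegral.integral_eq_sub_of_hasDerivAt hderiv
    ((by fun_prop : Continuous _).intervalIntegrable 0 1)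
  rw [intervalIntegral.integral_sub
    ((intervalIntegrable_pow_mul_one_sub_pow _ _).const_mul _)
    ((intervalIntegrable_pow_mul_one_sub_pow _ _).const_mul _),
    intervalIntegral.integral_const_mul, intervalIntegral.integral_const_mul] at hftc
  rw [betaInt, betaInt]
  norm_num at hftc
  linarith

lemma betaInt_succ_right (a b : ℕ) :
    betaInt a (b + 1) = ((b : ℝ) + 1) / (a + b + 2) * betaInt a b := by
  have hsplit := betaInt_eq_add a b
  have hparts := betaInt_parts a b
  field_simp
  linear_combination (-(b : ℝ) - 1) * hsplit + hparts

lemma betaInt_eq_sum (a b : ℕ) :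
    betaInt a b = ∑ m ∈ range (b + 1), (b.choose m : ℝ) * (-1) ^ m / (a + m + 1) := by
  have hexpand : ∀ x : ℝ, x ^ a * (1 - x) ^ b =
      ∑ m ∈ range (b + 1), (b.choose m : ℝ) * (-1) ^ m * x ^ (a + m) := by
    intro x
    rw [sub_eq_neg_add, add_pow, mul_sum]
    refine sum_congr rfl fun m _ => ?_
    rw [neg_pow, pow_add]
    ring
  simp_rw [betaInt, hexpand]
  rw [intervalIntegral.integral_finsetSum fun m _ =>
    (by fun_prop : Continuous _).intervalIntegrable 0 1]
  refine sum_congr rfl fun m _ => ?_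
  rw [intervalIntegral.integral_const_mul, integral_pow]
  push_cast
  ring

lemma dvd_lcmUpTo {d n : ℕ} (hd : 1 ≤ d) (hdn : d ≤ n) : d ∣ lcmUpTo n :=
  Finset.dvd_lcm (mem_Icc.mpr ⟨hd, hdn⟩)

lemma lcmUpTo_ne_zero (n : ℕ) : lcmUpTo n ≠ 0 := by
  simp only [lcmUpTo, ne_eq, Finset.lcm_eq_zero_iff, mem_Icc, id_eq, not_exists, not_and]
  omega

lemma natCast_div_mem_bot {d n : ℕ} (h : d ∣ n) : (n : ℝ) / d ∈ (⊥ : Subring ℝ) := by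
  rw [← Nat.cast_div_charZero h]
  exact natCast_mem _ _

lemma lcmUpTo_mul_betaInt_mem {a b n : ℕ} (h : a + b + 1 ≤ n) :
    (lcmUpTo n : ℝ) * betaInt a b ∈ (⊥ : Subring ℝ) := by
  rw [betaInt_eq_sum, mul_sum]
  refine Subring.sum_mem _ fun m hm => ?_
  have hmb : m ≤ b := Nat.lt_succ_iff.mp (mem_range.mp hm)
  have hdvd : a + m + 1 ∣ lcmUpTo n := dvd_lcmUpTo (by omega) (by omega)
  have hterm : (lcmUpTo n : ℝ) * ((b.choose m : ℝ) * (-1) ^ m / (a + m + 1)) =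
      (b.choose m : ℝ) * (-1) ^ m * ((lcmUpTo n : ℝ) / ((a + m + 1 : ℕ) : ℝ)) := by
    push_cast
    ring
  rw [hterm]
  exact Subring.mul_mem _ (Subring.mul_mem _ (natCast_mem _ _)
    (Subring.pow_mem _ (Subring.neg_mem _ (Subring.one_mem _)) _)) (natCast_div_mem_bot hdvd)

lemma sq_add_sq_pow (u v : ℝ) (j : ℕ) :
    (u ^ 2 + v ^ 2) ^ j =
      ∑ p ∈ antidiagonal j, (j.choose p.1 : ℝ) * (u ^ (2 * p.1) * v ^ (2 * p.2)) := by
  rw [(Commute.all _ _).add_pow']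
  simp only [nsmul_eq_mul, pow_mul]

lemma integral_sq_add_sq_pow (x c : ℝ) (j : ℕ) :
    ∫ y in (0 : ℝ)..c, (x ^ 2 + y ^ 2) ^ j =
      ∑ p ∈ antidiagonal j,
        (j.choose p.1 : ℝ) / (2 * p.2 + 1) * (x ^ (2 * p.1) * c ^ (2 * p.2 + 1)) := by
  simp_rw [sq_add_sq_pow x]
  rw [intervalIntegral.integral_finsetSum fun p _ =>
    (by fun_prop : Continuous _).intervalIntegrable 0 c]
  refine sum_congr rfl fun p _ => ?_
  rw [intervalIntegral.integral_const_mul, intervalIntegral.integral_const_mul, integral_pow]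
  push_cast
  field_simp
  ring

lemma integral_two_mul_sq_sub_add_one_pow (j : ℕ) :
    ∫ y in (0 : ℝ)..1, (2 * y ^ 2 - 2 * y + 1) ^ j =
      ∑ p ∈ antidiagonal j, (j.choose p.1 : ℝ) * betaInt (2 * p.1) (2 * p.2) := by
  have hexpand : ∀ y : ℝ, (2 * y ^ 2 - 2 * y + 1) ^ j =
      ∑ p ∈ antidiagonal j, (j.choose p.1 : ℝ) * (y ^ (2 * p.1) * (1 - y) ^ (2 * p.2)) := by
    intro y
    rw [← sq_add_sq_pow]
    ring
  simp_rw [hexpand]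
  rw [intervalIntegral.integral_finsetSum fun p _ =>
    (by fun_prop : Continuous _).intervalIntegrable 0 1]
  exact sum_congr rfl fun p _ => intervalIntegral.integral_const_mul _ _

def triangle : Set (ℝ × ℝ) := {p | 0 ≤ p.1 ∧ 0 ≤ p.2 ∧ 0 ≤ 1 - p.1 - p.2}

lemma mem_triangle {p : ℝ × ℝ} : p ∈ triangle ↔ 0 ≤ p.1 ∧ 0 ≤ p.2 ∧ 0 ≤ 1 - p.1 - p.2 :=
  Iff.rfl

lemma isClosed_triangle : IsClosed triangle :=
  (isClosed_le continuous_const continuous_fst).inter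
    ((isClosed_le continuous_const continuous_snd).inter
      (isClosed_le continuous_const ((continuous_const.sub continuous_fst).sub continuous_snd)))

lemma isCompact_triangle : IsCompact triangle :=
  (isCompact_Icc (a := ((0 : ℝ), (0 : ℝ))) (b := (1, 1))).of_isClosed_subset isClosed_triangle
    fun p hp => by
      obtain ⟨h1, h2, h3⟩ := mem_triangle.1 hp
      exact ⟨⟨h1, h2⟩, ⟨by linarith, by linarith⟩⟩

lemma measurableSet_triangle : MeasurableSet triangle :=
  isClosed_triangle.measurableSet

lemma integral_triangle_indicator_section (f : ℝ × ℝ → ℝ) (x : ℝ) :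
    ∫ y, triangle.indicator f (x, y) =
      (Set.Icc 0 1).indicator (fun x => ∫ y in (0 : ℝ)..(1 - x), f (x, y)) x := by
  by_cases hx : x ∈ Set.Icc (0 : ℝ) 1
  · have hsection : (fun y => triangle.indicator f (x, y)) =
        (Set.Icc 0 (1 - x)).indicator (fun y => f (x, y)) := by
      funext y
      by_cases hy : y ∈ Set.Icc 0 (1 - x)
      · rw [Set.indicator_of_mem hy,
          Set.indicator_of_mem (mem_triangle.2 ⟨hx.1, hy.1, by linarith [hy.2]⟩)]
      · have hyΔ : (x, y) ∉ triangle := fun h =>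
          hy ⟨(mem_triangle.1 h).2.1, by linarith [(mem_triangle.1 h).2.2]⟩
        rw [Set.indicator_of_notMem hy, Set.indicator_of_notMem hyΔ]
    rw [Set.indicator_of_mem hx, hsection, integral_indicator measurableSet_Icc,
      integral_Icc_eq_integral_Ioc, intervalIntegral.integral_of_le (by linarith [hx.2])]
  · have hsection : (fun y => triangle.indicator f (x, y)) = 0 := by
      funext y
      refine Set.indicator_of_notMem (fun h => hx ?_) _
      obtain ⟨h1, h2, h3⟩ := mem_triangle.1 h
      exact ⟨h1, by linarith⟩
    rw [Set.indicator_of_notMem hx, hsection, Pi.zero_def, integral_zero]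

lemma setIntegral_triangle {f : ℝ × ℝ → ℝ} (hf : Continuous f) :
    ∫ p in triangle, f p = ∫ x in (0 : ℝ)..1, ∫ y in (0 : ℝ)..(1 - x), f (x, y) := by
  have hint : Integrable (triangle.indicator f) :=
    (integrable_indicator_iff measurableSet_triangle).2
      (hf.continuousOn.integrableOn_compact isCompact_triangle)
  rw [← integral_indicator measurableSet_triangle, Measure.volume_eq_prod,
    integral_prod _ hint]
  simp_rw [integral_triangle_indicator_section]
  rw [integral_indicator measurableSet_Icc, integral_Icc_eq_integral_Ioc,
    intervalIntegral.integral_of_le zero_le_one]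

lemma integral_triangle_pow (j : ℕ) :
    ∫ p in triangle, (p.1 ^ 2 + p.2 ^ 2) ^ j =
      (∫ y in (0 : ℝ)..1, (2 * y ^ 2 - 2 * y + 1) ^ j) / (2 * (j : ℝ) + 2) := by
  rw [setIntegral_triangle (by fun_prop)]
  simp_rw [integral_sq_add_sq_pow]
  rw [intervalIntegral.integral_finsetSum fun p _ =>
    (by fun_prop : Continuous _).intervalIntegrable 0 1,
    integral_two_mul_sq_sub_add_one_pow, sum_div]
  refine sum_congr rfl fun p hp => ?_
  have hsum : (p.1 : ℝ) + p.2 = j := by exact_mod_cast HasAntidiagonal.mem_antidiagonal.mp hp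
  rw [intervalIntegral.integral_const_mul]
  change _ * betaInt (2 * p.1) (2 * p.2 + 1) = _
  rw [betaInt_succ_right]
  push_cast
  rw [← hsum]
  field_simp

lemma eq_of_mem_triangle_of_sq_add_sq_eq_one {p : ℝ × ℝ} (hp : p ∈ triangle)
    (h : p.1 ^ 2 + p.2 ^ 2 = 1) : p = (1, 0) ∨ p = (0, 1) := by
  obtain ⟨x, y⟩ := p
  obtain ⟨hx, hy, hxy⟩ := mem_triangle.1 hp
  dsimp only at hx hy hxy h
  have hx' : x * (x - 1) = 0 := by nlinarith
  rcases mul_eq_zero.1 hx' with hx0 | hx1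
  · right
    have hy1 : y = 1 := by nlinarith
    rw [hx0, hy1]
  · left
    have hx1 : x = 1 := by linarith
    have hy0 : y = 0 := by nlinarith
    rw [hx1, hy0]

lemma ae_restrict_triangle_sq_add_sq_ne_one :
    ∀ᵐ p ∂volume.restrict triangle, p.1 ^ 2 + p.2 ^ 2 ≠ 1 := by
  have hcorners : ∀ᵐ p : ℝ × ℝ, p ∉ ({(1, 0), (0, 1)} : Set (ℝ × ℝ)) :=
    (Set.toFinite _).countable.ae_notMem _
  rw [ae_restrict_iff' measurableSet_triangle]
  filter_upwards [hcorners] with p hp hpΔ hsq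
  exact hp (eq_of_mem_triangle_of_sq_add_sq_eq_one hpΔ hsq)

lemma pow_sub_one_div_one_sub {K : Type*} [Field K] {t : K} (ht : t ≠ 1) (k : ℕ) :
    (t ^ k - 1) / (1 - t) = -∑ j ∈ range k, t ^ j := by
  rw [geom_sum_eq ht, ← div_neg, neg_sub]

lemma integral_triangle_pow_sub_one_div (k : ℕ) :
    ∫ p in triangle, ((p.1 ^ 2 + p.2 ^ 2) ^ k - 1) / (1 - p.1 ^ 2 - p.2 ^ 2) =
      -∑ j ∈ range k, (∫ y in (0 : ℝ)..1, (2 * y ^ 2 - 2 * y + 1) ^ j) / (2 * (j : ℝ) + 2) := by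
  have hgeom : (fun p : ℝ × ℝ => ((p.1 ^ 2 + p.2 ^ 2) ^ k - 1) / (1 - p.1 ^ 2 - p.2 ^ 2))
      =ᵐ[volume.restrict triangle] fun p => -∑ j ∈ range k, (p.1 ^ 2 + p.2 ^ 2) ^ j := by
    filter_upwards [ae_restrict_triangle_sq_add_sq_ne_one] with p hp
    rw [sub_sub, pow_sub_one_div_one_sub hp]
  rw [integral_congr_ae hgeom, integral_neg, integral_finsetSum _ fun j _ =>
    (by fun_prop : Continuous _).continuousOn.integrableOn_compact isCompact_triangle]
  simp_rw [integral_triangle_pow]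

lemma lcmUpTo_mul_integral_pow_mem {j k : ℕ} (hj : j < k) :
    (lcmUpTo (2 * k - 1) : ℝ) * ∫ y in (0 : ℝ)..1, (2 * y ^ 2 - 2 * y + 1) ^ j ∈
      (⊥ : Subring ℝ) := by
  rw [integral_two_mul_sq_sub_add_one_pow, mul_sum]
  refine Subring.sum_mem _ fun p hp => ?_
  rw [HasAntidiagonal.mem_antidiagonal] at hp
  rw [mul_left_comm]
  exact Subring.mul_mem _ (natCast_mem _ _) (lcmUpTo_mul_betaInt_mem (by omega))

lemma lcmUpTo_mul_sum_mem (k : ℕ) :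
    ((2 * lcmUpTo k * lcmUpTo (2 * k - 1) : ℕ) : ℝ) *
      ∑ j ∈ range k, (∫ y in (0 : ℝ)..1, (2 * y ^ 2 - 2 * y + 1) ^ j) / (2 * (j : ℝ) + 2) ∈
        (⊥ : Subring ℝ) := by
  rw [mul_sum]
  refine Subring.sum_mem _ fun j hj => ?_
  have hjk : j < k := mem_range.1 hj
  have hterm : ((2 * lcmUpTo k * lcmUpTo (2 * k - 1) : ℕ) : ℝ) *
      ((∫ y in (0 : ℝ)..1, (2 * y ^ 2 - 2 * y + 1) ^ j) / (2 * (j : ℝ) + 2)) =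
      (lcmUpTo k : ℝ) / ((j + 1 : ℕ) : ℝ) *
        ((lcmUpTo (2 * k - 1) : ℝ) * ∫ y in (0 : ℝ)..1, (2 * y ^ 2 - 2 * y + 1) ^ j) := by
    push_cast
    field_simp
  rw [hterm]
  exact Subring.mul_mem _ (natCast_div_mem_bot (dvd_lcmUpTo (by omega) (by omega)))
    (lcmUpTo_mul_integral_pow_mem hjk)

theorem integral_second_type_general (k : ℕ) :
    (∫ p : ℝ × ℝ in {p : ℝ × ℝ | 0 ≤ p.1 ∧ 0 ≤ p.2 ∧ 0 ≤ 1 - p.1 - p.2},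
        ((p.1 ^ 2 + p.2 ^ 2) ^ k - 1) / (1 - p.1 ^ 2 - p.2 ^ 2)) =
      -(1 / 2) *
        ∫ y in (0 : ℝ)..1, ∑ j ∈ Finset.range k, (2 * y ^ 2 - 2 * y + 1) ^ j / (j + 1) ∧
    ∃ a : ℤ,
      (∫ p : ℝ × ℝ in {p : ℝ × ℝ | 0 ≤ p.1 ∧ 0 ≤ p.2 ∧ 0 ≤ 1 - p.1 - p.2},
          ((p.1 ^ 2 + p.2 ^ 2) ^ k - 1) / (1 - p.1 ^ 2 - p.2 ^ 2)) =
        (a : ℝ) / ((2 * lcmUpTo k * lcmUpTo (2 * k - 1) : ℕ) : ℝ) := by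
  change ∫ p in triangle, _ = _ ∧ ∃ a : ℤ, ∫ p in triangle, _ = _
  rw [integral_triangle_pow_sub_one_div]
  constructor
  · rw [intervalIntegral.integral_finsetSum fun j _ =>
      (by fun_prop : Continuous _).intervalIntegrable 0 1, neg_mul, mul_sum]
    refine congrArg _ (sum_congr rfl fun j _ => ?_)
    rw [intervalIntegral.integral_div]
    field_simp
  · obtain ⟨a, ha⟩ := Subring.mem_bot.1 (neg_mem (lcmUpTo_mul_sum_mem k))
    have hN : ((2 * lcmUpTo k * lcmUpTo (2 * k - 1) : ℕ) : ℝ) ≠ 0 := by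
      exact_mod_cast Nat.mul_ne_zero (Nat.mul_ne_zero two_ne_zero (lcmUpTo_ne_zero k))
        (lcmUpTo_ne_zero _)
    exact ⟨a, by rw [ha, neg_div, mul_div_cancel_left₀ _ hN]⟩

/-- For `k ≥ 1`, `∫_Δ ((x²+y²)^k - 1)/(1-x²-y²) dxdy
= -(1/2) ∫₀¹ ∑_{j=0}^{k-1} (2y²-2y+1)^j/(j+1) dy`; in particular this is a rational
number whose denominator divides `2·L_k·L_{2k-1}`. -/
theorem integral_second_type (k : ℕ) (hk : 1 ≤ k) :
    (∫ p : ℝ × ℝ in {p : ℝ × ℝ | 0 ≤ p.1 ∧ 0 ≤ p.2 ∧ 0 ≤ 1 - p.1 - p.2},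
        ((p.1 ^ 2 + p.2 ^ 2) ^ k - 1) / (1 - p.1 ^ 2 - p.2 ^ 2)) =
      -(1 / 2) *
        ∫ y in (0 : ℝ)..1, ∑ j ∈ Finset.range k, (2 * y ^ 2 - 2 * y + 1) ^ j / (j + 1) ∧
    ∃ a : ℤ,
      (∫ p : ℝ × ℝ in {p : ℝ × ℝ | 0 ≤ p.1 ∧ 0 ≤ p.2 ∧ 0 ≤ 1 - p.1 - p.2},
          ((p.1 ^ 2 + p.2 ^ 2) ^ k - 1) / (1 - p.1 ^ 2 - p.2 ^ 2)) =
        (a : ℝ) / ((2 * lcmUpTo k * lcmUpTo (2 * k - 1) : ℕ) : ℝ) :=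
  integral_second_type_general k
end

section
/- Let F ∈ ℚ[x,y] be a polynomial invariant under both σ: (x,y) ↦ (-y,x) and τ: (x,y) ↦ (y,x). Then F is a polynomial with rational coefficients in the two elements x²y² and x²+y²; equivalently, F can be written as ∑_{m even, r ≥ 0} e_{m,r} (xy)^m (1-x²-y²)^r with e_{m,r} ∈ ℚ. -/
/-!
The composites `τσ` and `στ` are the sign changes `x ↦ -x` and `y ↦ -y`, so every monomial of an
invariant `F` has even exponents and `F = G(x², y²)`. Squaring the variables is injective and
commutes with `τ`, so `G` is symmetric, hence a polynomial in `xy` and `x + y` by the fundamental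
theorem of symmetric polynomials. Then `F` is a polynomial in `x²y²` and `x² + y² = 1 - g`.
-/

open MvPolynomial

namespace MvPolynomial

variable {σ R : Type*}

section CommSemiring

variable [CommSemiring R]

theorem monomial_mem_range_expand {p : ℕ} {d : σ →₀ ℕ} (hd : ∀ i, p ∣ d i) (r : R) :
    monomial d r ∈ (expand p : MvPolynomial σ R →ₐ[R] _).range := by
  refine ⟨monomial (d.mapRange (· / p) (Nat.zero_div p)) r, (expand_monomial _ _ _).trans ?_⟩
  congr 2
  ext i
  simp [Nat.mul_div_cancel' (hd i)]

theorem mem_range_expand_of_forall_dvd {p : ℕ} {φ : MvPolynomial σ R}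
    (h : ∀ d ∈ φ.support, ∀ i, p ∣ d i) : φ ∈ (expand p : MvPolynomial σ R →ₐ[R] _).range := by
  rw [φ.as_sum]
  exact Subalgebra.sum_mem _ fun d hd => monomial_mem_range_expand (h d hd) _

theorem IsSymmetric.of_expand {p : ℕ} (hp : 0 < p) {φ : MvPolynomial σ R}
    (h : (expand p φ).IsSymmetric) : φ.IsSymmetric :=
  fun e => expand_injective hp (by rw [← rename_expand, h e])

theorem aeval_aeval_eq_self {f g : σ → MvPolynomial σ R} {φ : MvPolynomial σ R}
    (hf : aeval f φ = φ) (hg : aeval g φ = φ) : aeval (fun i => aeval f (g i)) φ = φ := by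
  rw [← comp_aeval_apply, hg, hf]

end CommSemiring

section CommRing

variable [CommRing R] [DecidableEq σ]

theorem aeval_update_neg_X_monomial (i : σ) (d : σ →₀ ℕ) (r : R) :
    aeval (Function.update X i (-X i)) (monomial d r) = monomial d ((-1) ^ d i * r) := by
  have hrest : (d.erase i).prod (fun j k => Function.update (X : σ → MvPolynomial σ R) i (-X i) j ^ k)
      = (d.erase i).prod (fun j k => X j ^ k) :=
    Finsupp.prod_congr fun j hj => by
      rw [Finsupp.support_erase] at hj
      rw [Function.update_of_ne (Finset.ne_of_mem_erase hj)]
  rw [aeval_monomial, monomial_eq, ← Finsupp.mul_prod_erase' d i _ (fun _ => pow_zero _),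
    ← Finsupp.mul_prod_erase' d i _ (fun _ => pow_zero _), hrest, Function.update_self, neg_pow,
    C_mul, map_pow, map_neg, map_one, algebraMap_eq]
  ring

theorem coeff_aeval_update_neg_X (i : σ) (φ : MvPolynomial σ R) (d : σ →₀ ℕ) :
    coeff d (aeval (Function.update X i (-X i)) φ) = (-1) ^ d i * coeff d φ := by
  induction φ using induction_on' with
  | monomial u r =>
    rw [aeval_update_neg_X_monomial, coeff_monomial, coeff_monomial]
    split_ifs with h
    · rw [h]
    · rw [mul_zero]
  | add p q hp hq => rw [map_add, coeff_add, coeff_add, hp, hq, mul_add]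

theorem even_of_aeval_update_neg_X_eq_self [IsAddTorsionFree R] {i : σ} {φ : MvPolynomial σ R}
    (h : aeval (Function.update X i (-X i)) φ = φ) {d : σ →₀ ℕ} (hd : d ∈ φ.support) :
    Even (d i) := by
  by_contra hodd
  have hcoeff := coeff_aeval_update_neg_X i φ d
  rw [h, (Nat.not_even_iff_odd.mp hodd).neg_one_pow, neg_one_mul, self_eq_neg] at hcoeff
  exact mem_support_iff.mp hd hcoeff

theorem mem_range_expand_two_of_aeval_update_neg_X_eq_self [IsAddTorsionFree R]
    {φ : MvPolynomial σ R} (h : ∀ i, aeval (Function.update X i (-X i)) φ = φ) :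
    φ ∈ (expand 2 : MvPolynomial σ R →ₐ[R] _).range :=
  mem_range_expand_of_forall_dvd fun _ hd i =>
    (even_of_aeval_update_neg_X_eq_self (h i) hd).two_dvd

end CommRing

theorem IsSymmetric.exists_eq_aeval_mul_add [CommRing R] {φ : MvPolynomial (Fin 2) R}
    (h : φ.IsSymmetric) : ∃ P : MvPolynomial (Fin 2) R, φ = aeval ![X 0 * X 1, X 0 + X 1] P := by
  obtain ⟨Q, hQ⟩ := esymmAlgHom_surjective (σ := Fin 2) R (n := 2) le_rfl ⟨φ, h⟩
  refine ⟨rename (Equiv.swap 0 1) Q, ?_⟩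
  have hesymm : ![X 0 * X 1, X 0 + X 1] ∘ Equiv.swap 0 1 =
      fun i : Fin 2 => esymm (Fin 2) R (i + 1) := by
    funext i
    fin_cases i
    · simp [esymm_one, Fin.sum_univ_two]
    · have hpow : Finset.powersetCard 2 (Finset.univ : Finset (Fin 2)) = {Finset.univ} :=
        Finset.powersetCard_self _
      simp [esymm, hpow, Fin.prod_univ_two]
  rw [aeval_rename, hesymm, ← esymmAlgHom_apply, hQ]

theorem isSymmetric_of_aeval_swap_eq_self [CommSemiring R] {φ : MvPolynomial (Fin 2) R}
    (h : aeval ![X 1, X 0] φ = φ) : φ.IsSymmetric := by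
  have hswap : (rename (Equiv.swap 0 1) : MvPolynomial (Fin 2) R →ₐ[R] _) = aeval ![X 1, X 0] := by
    ext i
    fin_cases i <;> simp
  have hperm : ∀ e : Equiv.Perm (Fin 2), e = 1 ∨ e = Equiv.swap 0 1 := by decide
  intro e
  rcases hperm e with rfl | rfl
  · exact rename_id_apply φ
  · rw [hswap, h]

end MvPolynomial

/-- If `F ∈ ℚ[x,y]` is invariant under both `σ : (x,y) ↦ (-y,x)` and `τ : (x,y) ↦ (y,x)`,
then `F` is a polynomial with rational coefficients in `x²y²` and `x²+y²`; equivalently,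
`F` is a polynomial in `x²y²` and `g = 1-x²-y²` (which encodes the expansion
`F = ∑_{m even, r≥0} e_{m,r} (xy)^m g^r`). -/
theorem sigma_tau_invariant_structure (F : MvPolynomial (Fin 2) ℚ)
    (hσ : aeval ![-(X 1 : MvPolynomial (Fin 2) ℚ), X 0] F = F)
    (hτ : aeval ![(X 1 : MvPolynomial (Fin 2) ℚ), X 0] F = F) :
    (∃ P : MvPolynomial (Fin 2) ℚ,
      F = aeval ![(X 0 : MvPolynomial (Fin 2) ℚ) ^ 2 * X 1 ^ 2, X 0 ^ 2 + X 1 ^ 2] P) ∧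
    (∃ P : MvPolynomial (Fin 2) ℚ,
      F = aeval ![(X 0 : MvPolynomial (Fin 2) ℚ) ^ 2 * X 1 ^ 2,
          1 - X 0 ^ 2 - X 1 ^ 2] P) := by
  have hsign : ∀ i, aeval (Function.update X i (-X i)) F = F := by
    intro i
    fin_cases i
    · convert aeval_aeval_eq_self hτ hσ using 3
      funext j; fin_cases j <;> simp
    · convert aeval_aeval_eq_self hσ hτ using 3
      funext j; fin_cases j <;> simp
  have hsymm := isSymmetric_of_aeval_swap_eq_self hτ
  obtain ⟨G, rfl⟩ :=
    (AlgHom.mem_range _).mp (mem_range_expand_two_of_aeval_update_neg_X_eq_self hsign)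
  obtain ⟨P, rfl⟩ := (hsymm.of_expand two_pos).exists_eq_aeval_mul_add
  have hsquares : expand 2 (aeval ![X 0 * X 1, X 0 + X 1] P) =
      aeval ![(X 0 : MvPolynomial (Fin 2) ℚ) ^ 2 * X 1 ^ 2, X 0 ^ 2 + X 1 ^ 2] P := by
    rw [comp_aeval_apply]
    congr 2
    funext i; fin_cases i <;> simp
  refine ⟨⟨P, hsquares⟩, ⟨aeval ![X 0, 1 - X 1] P, ?_⟩⟩
  rw [hsquares, comp_aeval_apply]
  congr 2
  funext i
  fin_cases i
  · simp
  · simp only [Fin.mk_one, Matrix.cons_val_one, Matrix.cons_val_zero, map_sub, map_one, aeval_X]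
    ring
end

section
/- Let t ≥ 1 be an integer and F ∈ ℚ[x,y] be divisible by x^{t+1} y^{t+1}, say F = x^{t+1} y^{t+1} f. Write g = 1-x²-y². Then the integral over the boundary path of the simplex Δ of the 1-form F dy/(x g^t) reduces to the integral over the segment from (1,0) to (0,1), and equals (1/2^t) ∫₀¹ y·f(1-y,y) dy, which is a rational number. -/
open MvPolynomial MeasureTheory

/-- `F = x^{t+1} y^{t+1} f`, evaluated at a real point. -/
noncomputable def Fval (t : ℕ) (f : MvPolynomial (Fin 2) ℚ) (a b : ℝ) : ℝ :=
  a ^ (t + 1) * b ^ (t + 1) * aeval ![a, b] f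

/-- `g = 1 - x² - y²`. -/
def gval (a b : ℝ) : ℝ := 1 - a ^ 2 - b ^ 2

/-!
On the segment `(1 - s, s)` we have `g = 2 s (1 - s)`, so the factor `x^{t+1} y^{t+1}` of `F`
cancels `x g^t` up to the constant `2^t` and one factor `y`: the segment integrand is
`s f(1 - s, s) / 2^t`, a polynomial with rational coefficients, whose integral over `[0, 1]` is
rational. On the other two sides the form vanishes identically.
-/

theorem Polynomial.exists_rat_intervalIntegral_aeval (p : Polynomial ℚ) (a b : ℚ) :
    ∃ q : ℚ, ∫ x in (a : ℝ)..b, aeval x p = (q : ℝ) := by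
  refine ⟨∑ i ∈ Finset.range (p.natDegree + 1),
    p.coeff i * ((b ^ (i + 1) - a ^ (i + 1)) / (i + 1)), ?_⟩
  simp only [Polynomial.aeval_eq_sum_range, Algebra.smul_def, eq_ratCast]
  rw [intervalIntegral.integral_finsetSum fun i _ =>
    (by fun_prop : Continuous _).intervalIntegrable _ _]
  push_cast
  refine Finset.sum_congr rfl fun i _ => ?_
  rw [intervalIntegral.integral_const_mul, integral_pow]

theorem exists_rat_intervalIntegral_mul_aeval_segment (f : MvPolynomial (Fin 2) ℚ) :
    ∃ q : ℚ, ∫ y in (0 : ℝ)..1, y * aeval ![1 - y, y] f = (q : ℝ) := by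
  have hcomp (y : ℝ) : y * aeval ![1 - y, y] f =
      Polynomial.aeval y
        (Polynomial.X * aeval ![1 - Polynomial.X, (Polynomial.X : Polynomial ℚ)] f) := by
    rw [map_mul, Polynomial.aeval_X, comp_aeval_apply]
    congr 3
    funext i
    fin_cases i <;> simp
  simp only [hcomp]
  exact_mod_cast Polynomial.exists_rat_intervalIntegral_aeval _ 0 1

theorem gval_segment (s : ℝ) : gval (1 - s) s = 2 * s * (1 - s) := by
  unfold gval
  ring

theorem Fval_div_segment (t : ℕ) (f : MvPolynomial (Fin 2) ℚ) {s : ℝ} (hs : s ≠ 1) :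
    Fval t f (1 - s) s / ((1 - s) * gval (1 - s) s ^ t) =
      1 / 2 ^ t * (s * aeval ![1 - s, s] f) := by
  rcases eq_or_ne s 0 with rfl | hs0
  · simp [Fval]
  have h1s : 1 - s ≠ 0 := sub_ne_zero.mpr hs.symm
  rw [Fval, gval_segment, mul_pow, mul_pow]
  field_simp
  ring

theorem intervalIntegral_Fval_div_segment (t : ℕ) (f : MvPolynomial (Fin 2) ℚ) :
    ∫ s in (0 : ℝ)..1, Fval t f (1 - s) s / ((1 - s) * gval (1 - s) s ^ t) * 1 =
      1 / 2 ^ t * ∫ y in (0 : ℝ)..1, y * aeval ![1 - y, y] f := by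
  rw [← intervalIntegral.integral_const_mul]
  refine intervalIntegral.integral_congr_Ioo_of_le zero_le_one fun s hs => ?_
  rw [mul_one, Fval_div_segment t f hs.2.ne]

theorem boundary_integral_rational_general (t : ℕ) (f : MvPolynomial (Fin 2) ℚ) :
    ((∫ s in (0 : ℝ)..1, Fval t f s 0 / (s * gval s 0 ^ t) * 0) +
        (∫ s in (0 : ℝ)..1, Fval t f (1 - s) s / ((1 - s) * gval (1 - s) s ^ t) * 1) +
        ∫ s in (0 : ℝ)..1, Fval t f 0 (1 - s) / (0 * gval 0 (1 - s) ^ t) * (-1)) =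
      (∫ s in (0 : ℝ)..1, Fval t f (1 - s) s / ((1 - s) * gval (1 - s) s ^ t) * 1) ∧
    ((∫ s in (0 : ℝ)..1, Fval t f s 0 / (s * gval s 0 ^ t) * 0) +
        (∫ s in (0 : ℝ)..1, Fval t f (1 - s) s / ((1 - s) * gval (1 - s) s ^ t) * 1) +
        ∫ s in (0 : ℝ)..1, Fval t f 0 (1 - s) / (0 * gval 0 (1 - s) ^ t) * (-1)) =
      (1 / 2 ^ t) * ∫ y in (0 : ℝ)..1, y * aeval ![1 - y, y] f ∧
    ∃ q : ℚ,
      ((∫ s in (0 : ℝ)..1, Fval t f s 0 / (s * gval s 0 ^ t) * 0) +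
          (∫ s in (0 : ℝ)..1, Fval t f (1 - s) s / ((1 - s) * gval (1 - s) s ^ t) * 1) +
          ∫ s in (0 : ℝ)..1, Fval t f 0 (1 - s) / (0 * gval 0 (1 - s) ^ t) * (-1)) =
        (q : ℝ) := by
  have hbottom : ∫ s in (0 : ℝ)..1, Fval t f s 0 / (s * gval s 0 ^ t) * 0 = 0 := by simp
  have hleft : ∫ s in (0 : ℝ)..1, Fval t f 0 (1 - s) / (0 * gval 0 (1 - s) ^ t) * (-1) = 0 := by
    simp
  have hreduce := intervalIntegral_Fval_div_segment t f
  obtain ⟨q, hq⟩ := exists_rat_intervalIntegral_mul_aeval_segment f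
  rw [hbottom, hleft, zero_add, add_zero, hreduce, hq]
  exact ⟨rfl, rfl, q / 2 ^ t, by push_cast; ring⟩

/-- Let `t ≥ 1` and `F = x^{t+1} y^{t+1} f` with `f ∈ ℚ[x,y]`. The integral of the 1-form
`F dy/(x g^t)` over the boundary of the simplex `Δ` (bottom segment `(s,0)`, the segment
from `P=(1,0)` to `Q=(0,1)` parametrized by `(1-s,s)`, and the left segment `(0,1-s)`)
reduces to the integral over the segment `[P,Q]`, equals `(1/2^t) ∫₀¹ y f(1-y,y) dy`,
and is a rational number. -/
theorem boundary_integral_rational (t : ℕ) (ht : 1 ≤ t) (f : MvPolynomial (Fin 2) ℚ) :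
    ((∫ s in (0 : ℝ)..1, Fval t f s 0 / (s * gval s 0 ^ t) * 0) +
        (∫ s in (0 : ℝ)..1, Fval t f (1 - s) s / ((1 - s) * gval (1 - s) s ^ t) * 1) +
        ∫ s in (0 : ℝ)..1, Fval t f 0 (1 - s) / (0 * gval 0 (1 - s) ^ t) * (-1)) =
      (∫ s in (0 : ℝ)..1, Fval t f (1 - s) s / ((1 - s) * gval (1 - s) s ^ t) * 1) ∧
    ((∫ s in (0 : ℝ)..1, Fval t f s 0 / (s * gval s 0 ^ t) * 0) +
        (∫ s in (0 : ℝ)..1, Fval t f (1 - s) s / ((1 - s) * gval (1 - s) s ^ t) * 1) +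
        ∫ s in (0 : ℝ)..1, Fval t f 0 (1 - s) / (0 * gval 0 (1 - s) ^ t) * (-1)) =
      (1 / 2 ^ t) * ∫ y in (0 : ℝ)..1, y * aeval ![1 - y, y] f ∧
    ∃ q : ℚ,
      ((∫ s in (0 : ℝ)..1, Fval t f s 0 / (s * gval s 0 ^ t) * 0) +
          (∫ s in (0 : ℝ)..1, Fval t f (1 - s) s / ((1 - s) * gval (1 - s) s ^ t) * 1) +
          ∫ s in (0 : ℝ)..1, Fval t f 0 (1 - s) / (0 * gval 0 (1 - s) ^ t) * (-1)) =
        (q : ℝ) :=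
  boundary_integral_rational_general t f
end
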